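/- arXiv:1804.03701 — 6 statements merged into one kernel-verified Lean document; each statement's English description precedes it below -/
import Mathlib

section
/- Let λ ∈ Par^k_ℓ (a partition with at most ℓ parts, each at most k), let κ = core(λ) be the corresponding (k+1)-core, and let f(z) = κ_z − z + 1 be the row map. Then for every row r ≥ 1, f(r) = f(r + (k+1) − λ_r) + (k+1). -/
open MvPolynomial Finset
open scoped Classical

noncomputable section

/-- Model of the ring of symmetric functions over a field `K`:
the polynomial ring `K[p₁, p₂, …]` in the power sums, where `X n ↦ p_{n+1}`. -/
abbrev SymFn (K : Type) [Field K] : Type := MvPolynomial ℕ K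

/-- Complete homogeneous symmetric functions, defined via Newton's identity
`(d+1) h_{d+1} = ∑_{i=1}^{d+1} p_i h_{d+1-i}`. -/
noncomputable def hcomp (K : Type) [Field K] : ℕ → SymFn K
  | 0 => 1
  | d + 1 => ((d + 1 : K)⁻¹) • ∑ i ∈ Finset.range (d + 1), X i * hcomp K (d - i)
termination_by d => d
decreasing_by omega

/-- Elementary symmetric functions, defined via Newton's identity
`(d+1) e_{d+1} = ∑_{i=1}^{d+1} (-1)^{i-1} p_i e_{d+1-i}`. -/
noncomputable def esym (K : Type) [Field K] : ℕ → SymFn K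
  | 0 => 1
  | d + 1 => ((d + 1 : K)⁻¹) •
      ∑ i ∈ Finset.range (d + 1), ((-1 : K) ^ i) • (X i * esym K (d - i))
termination_by d => d
decreasing_by omega

/-- `h_d` for integer `d`, with `h_d = 0` for `d < 0` and `h_0 = 1`. -/
noncomputable def hZ (K : Type) [Field K] (d : ℤ) : SymFn K :=
  if 0 ≤ d then hcomp K d.toNat else 0

/-- `e_d` for integer `d`, with `e_d = 0` for `d < 0` and `e_0 = 1`. -/
noncomputable def eZ (K : Type) [Field K] (d : ℤ) : SymFn K :=
  if 0 ≤ d then esym K d.toNat else 0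

/-- The generalized Schur function `s_γ = det(h_{γ_i + j - i})` (Jacobi–Trudi). -/
noncomputable def sJT (K : Type) [Field K] (ℓ : ℕ) (γ : Fin ℓ → ℤ) : SymFn K :=
  Matrix.det (Matrix.of fun i j : Fin ℓ => hZ K (γ i + (j.val : ℤ) - (i.val : ℤ)))

/-- The constant `z_λ = ∏ i^{m_i} m_i!`, in terms of the exponent vector of a
monomial in the power sums (`X n ↦ p_{n+1}`). -/
noncomputable def zee (K : Type) [Field K] (m : ℕ →₀ ℕ) : K :=
  m.prod fun n k => ((n : K) + 1) ^ k * (Nat.factorial k : K)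

/-- The Hall inner product, determined by `⟨p_λ, p_μ⟩ = δ_{λμ} z_λ`. -/
noncomputable def hall (K : Type) [Field K] (f g : SymFn K) : K :=
  ∑ m ∈ f.support, MvPolynomial.coeff m f * MvPolynomial.coeff m g * zee K m

/-- A root ideal: an upper order ideal of `Δ⁺_ℓ = {(i,j) : i < j}` for the order
`(a,b) ≤ (c,d) ↔ a ≥ c ∧ b ≤ d`. -/
def IsRootIdeal (ℓ : ℕ) (Ψ : Finset (Fin ℓ × Fin ℓ)) : Prop :=
  (∀ p ∈ Ψ, p.1 < p.2) ∧
    ∀ p ∈ Ψ, ∀ q : Fin ℓ × Fin ℓ, q.1 ≤ p.1 → p.2 ≤ q.2 → q ∈ Ψ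

/-- The Catalan function `H(Ψ; γ) = ∏_{(i,j) ∈ Ψ} (1 - t R_{ij})^{-1} s_γ`,
expanded as `∑_n t^{|n|} s_{γ + ∑_α n(α) ε(α)}` over multiplicity functions `n`
supported on `Ψ` (all but finitely many terms vanish). -/
noncomputable def catalanH (K : Type) [Field K] (t : K) (ℓ : ℕ)
    (Ψ : Finset (Fin ℓ × Fin ℓ)) (γ : Fin ℓ → ℤ) : SymFn K :=
  ∑ᶠ n : Fin ℓ × Fin ℓ → ℕ,
    if ∀ q, q ∉ Ψ → n q = 0 then
      (t ^ (∑ q : Fin ℓ × Fin ℓ, n q)) •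
        sJT K ℓ (fun i => γ i + ∑ j : Fin ℓ, ((n (i, j) : ℤ) - (n (j, i) : ℤ)))
    else 0

/-- The ground field `ℚ(t)`. -/
abbrev KK : Type := RatFunc ℚ

/-- The parameter `t ∈ ℚ(t)`. -/
noncomputable def tt : KK := RatFunc.X

/-- The full set of positive roots `Δ⁺_ℓ`. -/
def deltaPlus (ℓ : ℕ) : Finset (Fin ℓ × Fin ℓ) :=
  Finset.univ.filter fun p => p.1 < p.2

/-- The `k`-Schur root ideal `Δ^k(μ) = {(i,j) ∈ Δ⁺_ℓ : k - μ_i + i < j}`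
(indices of rows/columns here are 0-based, the defining inequality is the
1-based one from the paper). -/
def deltaK (ℓ k : ℕ) (μ : Fin ℓ → ℤ) : Finset (Fin ℓ × Fin ℓ) :=
  Finset.univ.filter fun p =>
    p.1 < p.2 ∧ (k : ℤ) - μ p.1 + (p.1.val : ℤ) < (p.2.val : ℤ)

/-- Partial sums of the Garsia–Jing vertex operator
`B_m = ∑_{i,j ≥ 0} (-1)^i t^j h_{m+i+j} e_i^⊥ h_j^⊥`. -/
noncomputable def jingPartial (K : Type) [Field K] (t : K)
    (ep hp : ℕ → Module.End K (SymFn K)) (m : ℤ) (N : ℕ) (f : SymFn K) : SymFn K :=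
  ∑ i ∈ Finset.range N, ∑ j ∈ Finset.range N,
    ((-1 : K) ^ i * t ^ j) • (hZ K (m + (i : ℤ) + (j : ℤ)) * (ep i (hp j f)))

/-- `ep d` is the skewing operator `e_d^⊥`, `hp d` is `h_d^⊥` (adjoints of
multiplication with respect to the Hall inner product), and `B m` is the
Garsia–Jing vertex operator `B_m` (on each `f` the defining double series has
only finitely many nonzero terms, i.e., its partial sums stabilize to `B m f`). -/
def IsJingFamily (K : Type) [Field K] (t : K)
    (ep hp : ℕ → Module.End K (SymFn K)) (B : ℤ → Module.End K (SymFn K)) : Prop :=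
  (∀ (d : ℕ) (f g : SymFn K), hall K (ep d f) g = hall K f (eZ K (d : ℤ) * g)) ∧
  (∀ (d : ℕ) (f g : SymFn K), hall K (hp d f) g = hall K f (hZ K (d : ℤ) * g)) ∧
  (∀ (m : ℤ) (f : SymFn K), ∃ N₀ : ℕ, ∀ N ≥ N₀, B m f = jingPartial K t ep hp m N f)

end

/-- Number of boxes in column `c` (0-indexed) of the partition `κ`. -/
noncomputable def colLen (κ : ℕ → ℕ) (c : ℕ) : ℕ := Set.ncard {r : ℕ | c < κ r}

/-- Hook length of the box `(r, c)` (0-indexed) of the partition `κ`. -/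
noncomputable def hookLen (κ : ℕ → ℕ) (r c : ℕ) : ℕ :=
  (κ r - c) + (colLen κ c - r) - 1

/-- `κ` is an `n`-core: no box has hook length `n`. -/
noncomputable def IsCore (κ : ℕ → ℕ) (n : ℕ) : Prop :=
  ∀ r c : ℕ, c < κ r → hookLen κ r c ≠ n

/-- `edgeOne κ i` holds iff the letter `p_i` of the edge sequence of `κ` is a `1`
(a north step); the north step of row `z` (1-indexed) occurs at index
`f(z) = κ_z - z + 1`, i.e. at `κ r - r` for the 0-indexed row `r = z - 1`. -/
noncomputable def edgeOne (κ : ℕ → ℕ) (i : ℤ) : Prop :=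
  ∃ r : ℕ, i = (κ r : ℤ) - (r : ℤ)


section RowMapAux

/-- For an antitone, eventually-zero `κ`: `z < colLen κ c ↔ c < κ z`. -/
lemma colLen_lt_iff (κ : ℕ → ℕ) (hanti : Antitone κ) (N : ℕ) (hN : κ N = 0)
    (c z : ℕ) : z < colLen κ c ↔ c < κ z := by
  have hne : {r : ℕ | κ r ≤ c}.Nonempty := ⟨N, by simp [hN]⟩
  set m := sInf {r : ℕ | κ r ≤ c} with hmdef
  have hmem : κ m ≤ c := Nat.sInf_mem hne
  have hset : {r : ℕ | c < κ r} = Set.Iio m := by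
    ext r
    simp only [Set.mem_setOf_eq, Set.mem_Iio]
    constructor
    · intro h
      by_contra hcon
      push_neg at hcon
      have := hanti hcon
      omega
    · intro h
      by_contra hcon
      push_neg at hcon
      have := Nat.sInf_le (show r ∈ {r : ℕ | κ r ≤ c} from hcon)
      omega
  have hcol : colLen κ c = m := by
    rw [colLen, hset, ← Finset.coe_Iio, Set.ncard_coe_finset, Nat.card_Iio]
  rw [hcol]
  constructor
  · intro h
    by_contra hcon
    push_neg at hcon
    have := Nat.sInf_le (show z ∈ {r : ℕ | κ r ≤ c} from hcon)
    omega
  · intro h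
    by_contra hcon
    push_neg at hcon
    have := hanti hcon
    omega

end RowMapAux

/-- Let `κ` be the `(k+1)`-core corresponding to a `k`-bounded partition `λ`
(so `λ_r` is the number of boxes in row `r` of `κ` with hook length `≤ k`), and
let `f(z) = κ_z − z + 1` be the row map (below, rows are 0-indexed, so
`f` becomes `r ↦ κ_r − r`).  Then `f(r) = f(r + (k+1) − λ_r) + (k+1)` for all rows `r`. -/

theorem row_map_recursion (k : ℕ) (hk : 0 < k) (κ : ℕ → ℕ)
    (hanti : Antitone κ) (hfin : ∃ N, κ N = 0) (hcore : IsCore κ (k + 1))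
    (lam : ℕ → ℕ)
    (hlam : ∀ r : ℕ, lam r = Set.ncard {c : ℕ | c < κ r ∧ hookLen κ r c ≤ k}) :
    ∀ r : ℕ, (κ r : ℤ) - (r : ℤ) =
      ((κ (r + (k + 1) - lam r) : ℤ) - ((r + (k + 1) - lam r : ℕ) : ℤ)) + (k + 1 : ℤ) := by
  obtain ⟨N, hN⟩ := hfin
  intro r
  set f : ℕ → ℤ := fun z => (κ z : ℤ) - z with hf
  set g : ℕ → ℤ := fun c => (c : ℤ) + 1 - colLen κ c with hg
  have hcl : ∀ c z : ℕ, z < colLen κ c ↔ c < κ z := colLen_lt_iff κ hanti N hN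
  have hfanti : StrictAnti f := by
    apply strictAnti_nat_of_succ_lt
    intro z
    have := hanti (show z ≤ z + 1 by omega)
    simp only [hf]
    omega
  have hclanti : Antitone (colLen κ) := by
    intro c c' hcc
    by_contra h
    push_neg at h
    have h1 : c' < κ (colLen κ c) := (hcl c' (colLen κ c)).mp h
    have h2 : ¬ (colLen κ c < colLen κ c) := lt_irrefl _
    rw [hcl] at h2
    omega
  have hgmono : StrictMono g := by
    apply strictMono_nat_of_lt_succ
    intro c
    have := hclanti (show c ≤ c + 1 by omega)
    simp only [hg]
    omega
  have hdisj : ∀ z c : ℕ, f z ≠ g c := by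
    intro z c h
    simp only [hf, hg] at h
    by_cases hc : c < κ z
    · have h1 : z < colLen κ c := (hcl c z).mpr hc
      omega
    · have h1 : ¬ z < colLen κ c := fun hzz => hc ((hcl c z).mp hzz)
      push_neg at hc h1
      omega
  have hcover : ∀ x : ℤ, (∃ z, f z = x) ∨ (∃ c, g c = x) := by
    intro x
    by_cases hxg : ∃ c, g c = x
    · exact Or.inr hxg
    left
    push_neg at hxg
    by_cases hx0 : x < g 0
    · refine ⟨(-x).toNat, ?_⟩
      have hx1 : x ≤ -(colLen κ 0 : ℤ) := by simp only [hg] at hx0; omega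
      have hz : ¬ ((-x).toNat < colLen κ 0) := by omega
      rw [hcl] at hz
      simp only [hf]
      omega
    · push_neg at hx0
      have hgrow : ∀ c : ℕ, (c : ℤ) + g 0 ≤ g c := by
        intro c
        induction c with
        | zero => simp
        | succ c ih =>
          have := hgmono (show c < c + 1 by omega)
          push_cast
          omega
      have hne2 : ∃ c : ℕ, x ≤ g c := by
        refine ⟨(x - g 0).toNat, ?_⟩
        have := hgrow (x - g 0).toNat
        omega
      obtain ⟨c, hc_lt, hc_ge⟩ : ∃ c : ℕ, g c < x ∧ x ≤ g (c + 1) := by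
        have hfind := Nat.find_spec hne2
        have hc1pos : Nat.find hne2 ≠ 0 := by
          intro h0
          rw [h0] at hfind
          have := hxg 0
          omega
        refine ⟨Nat.find hne2 - 1, ?_, ?_⟩
        · have := Nat.find_min hne2 (show Nat.find hne2 - 1 < Nat.find hne2 by omega)
          omega
        · have heq : Nat.find hne2 - 1 + 1 = Nat.find hne2 := by omega
          rw [heq]
          exact hfind
      have hx_lt : x < g (c + 1) := lt_of_le_of_ne hc_ge (fun h => hxg (c + 1) h.symm)
      refine ⟨((c : ℤ) + 1 - x).toNat, ?_⟩
      simp only [hg] at hc_lt hx_lt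
      have h1 : ((c : ℤ) + 1 - x).toNat < colLen κ c := by omega
      have h2 : ¬ (((c : ℤ) + 1 - x).toNat < colLen κ (c + 1)) := by omega
      have h3 := (hcl c _).mp h1
      rw [hcl] at h2
      simp only [hf]
      omega
  have hcoreZ : ∀ s : ℕ, ∃ z, f z = f s - (k + 1 : ℤ) := by
    intro s
    rcases hcover (f s - (k + 1 : ℤ)) with h | ⟨c, hcg⟩
    · exact h
    exfalso
    have hpos : (1 : ℤ) ≤ f s - g c := by omega
    have hcs : c < κ s := by
      by_contra hcs
      push_neg at hcs
      have h1 : ¬ (s < colLen κ c) := by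
        rw [hcl]; omega
      push_neg at h1
      simp only [hf, hg] at hpos
      omega
    have hrc : s < colLen κ c := (hcl c s).mpr hcs
    have hhook : hookLen κ s c = k + 1 := by
      unfold hookLen
      simp only [hf, hg] at hcg
      omega
    exact hcore s c hcs hhook
  obtain ⟨z0, hz0⟩ := hcoreZ r
  have hz0r : r < z0 := by
    by_contra h
    push_neg at h
    have := hfanti.antitone h
    omega
  set I : Finset ℤ := Finset.Ico (f r - k) (f r) with hI
  have hIcard : I.card = k := by
    rw [hI, Int.card_Ico]
    omega
  have hsplit : (I.filter (fun x => ∃ z, f z = x)).card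
      + (I.filter (fun x => ¬ ∃ z, f z = x)).card = k := by
    rw [Finset.card_filter_add_card_filter_not, hIcard]
  have hA : (I.filter (fun x => ∃ z, f z = x)).card = z0 - r - 1 := by
    have himg : I.filter (fun x => ∃ z, f z = x) = (Finset.Ioo r z0).image f := by
      ext x
      simp only [Finset.mem_filter, Finset.mem_image, Finset.mem_Ioo, hI, Finset.mem_Ico]
      constructor
      · rintro ⟨⟨hx1, hx2⟩, z, hz⟩
        refine ⟨z, ⟨?_, ?_⟩, hz⟩
        · by_contra h
          push_neg at h
          have := hfanti.antitone h
          omega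
        · by_contra h
          push_neg at h
          have := hfanti.antitone h
          omega
      · rintro ⟨z, ⟨hz1, hz2⟩, hz⟩
        refine ⟨⟨?_, ?_⟩, ⟨z, hz⟩⟩
        · have := hfanti hz2
          omega
        · have := hfanti hz1
          omega
    rw [himg, Finset.card_image_of_injective _ hfanti.injective, Nat.card_Ioo]
  have hSeq : {c : ℕ | c < κ r ∧ hookLen κ r c ≤ k} = g ⁻¹' ↑I := by
    ext c
    simp only [Set.mem_setOf_eq, Set.mem_preimage, hI, Finset.coe_Ico, Set.mem_Ico]
    constructor
    · rintro ⟨hc1, hc2⟩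
      have hrc : r < colLen κ c := (hcl c r).mpr hc1
      have hpos : 1 ≤ f r - g c := by
        simp only [hf, hg]
        omega
      have hhook : (hookLen κ r c : ℤ) = f r - g c := by
        unfold hookLen
        simp only [hf, hg]
        omega
      omega
    · rintro ⟨hx1, hx2⟩
      have hpos : 1 ≤ f r - g c := by omega
      have hc1 : c < κ r := by
        by_contra h
        push_neg at h
        have h1 : ¬ (r < colLen κ c) := by rw [hcl]; omega
        push_neg at h1
        simp only [hf, hg] at hpos
        omega
      refine ⟨hc1, ?_⟩
      have hrc : r < colLen κ c := (hcl c r).mpr hc1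
      have hhook : (hookLen κ r c : ℤ) = f r - g c := by
        unfold hookLen
        simp only [hf, hg]
        omega
      omega
  have hB : (I.filter (fun x => ¬ ∃ z, f z = x)).card = lam r := by
    rw [hlam r, hSeq]
    have himg : g '' (g ⁻¹' ↑I) = ↑(I.filter (fun x => ¬ ∃ z, f z = x)) := by
      ext x
      simp only [Set.mem_image, Set.mem_preimage, Finset.coe_filter, Set.mem_setOf_eq,
        Finset.mem_coe]
      constructor
      · rintro ⟨c, hc, rfl⟩
        exact ⟨hc, fun ⟨z, hzz⟩ => hdisj z c hzz⟩
      · rintro ⟨hx, hnf⟩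
        rcases hcover x with h | ⟨c, hcx⟩
        · exact absurd h hnf
        · exact ⟨c, by rw [hcx]; exact hx, hcx⟩
    refine Eq.symm ?_
    calc (g ⁻¹' (↑I : Set ℤ)).ncard
        = (g '' (g ⁻¹' ↑I)).ncard := (Set.ncard_image_of_injective _ hgmono.injective).symm
      _ = (I.filter (fun x => ¬ ∃ z, f z = x)).card := by
          rw [himg, Set.ncard_coe_finset]
  have hz0eq : r + (k + 1) - lam r = z0 := by omega
  rw [hz0eq]
  simp only [hf] at hz0
  omega
end

section
/- Let Ψ ⊂ Δ⁺_ℓ be a root ideal with τ_i Ψ = Ψ (where τ_i is the i-th simple transposition acting on pairs of indices). Then for every γ ∈ ℤ^ℓ, the Catalan functions satisfy H(Ψ; γ) + H(Ψ; ε_{i+1} − ε_i + τ_i γ) = 0. -/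
open MvPolynomial Finset
open scoped Classical

lemma sJT_swap_row (K : Type) [Field K] (ℓ : ℕ) (i j : Fin ℓ)
    (hij : (j : ℕ) = (i : ℕ) + 1) (γ : Fin ℓ → ℤ) :
    sJT K ℓ (fun a =>
        γ (Equiv.swap i j a) + (if a = j then 1 else 0) - (if a = i then 1 else 0))
      = - sJT K ℓ γ := by
  have hne : i ≠ j := by
    intro h; rw [h] at hij; omega
  unfold sJT
  have hM : (Matrix.of fun a b : Fin ℓ =>
        hZ K ((γ (Equiv.swap i j a) + (if a = j then 1 else 0) - (if a = i then 1 else 0))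
          + (b.val : ℤ) - (a.val : ℤ)))
      = (Matrix.of fun a b : Fin ℓ =>
          hZ K (γ a + (b.val : ℤ) - (a.val : ℤ))).submatrix (Equiv.swap i j) id := by
    ext a b
    simp only [Matrix.submatrix_apply, Matrix.of_apply, id]
    congr 1
    have hswap : ((Equiv.swap i j a : Fin ℓ) : ℤ)
        = (a : ℤ) + (if a = i then 1 else 0) - (if a = j then 1 else 0) := by
      by_cases hai : a = i
      · subst hai
        rw [Equiv.swap_apply_left]
        simp [hne, hij]
      · by_cases haj : a = j
        · subst haj
          rw [Equiv.swap_apply_right]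
          simp [Ne.symm hne, hij]
        · rw [Equiv.swap_apply_of_ne_of_ne hai haj]
          simp [hai, haj]
    rw [hswap]; ring
  rw [hM, Matrix.det_permute, Equiv.Perm.sign_swap hne]
  push_cast
  ring

/-- If the root ideal `Ψ ⊂ Δ⁺_ℓ` is invariant under the simple transposition
`τ_i` (swapping indices `i` and `i+1`), then for every `γ ∈ ℤ^ℓ`,
`H(Ψ; γ) + H(Ψ; ε_{i+1} − ε_i + τ_i γ) = 0`. -/
theorem catalan_sl2_straightening (ℓ : ℕ) (Ψ : Finset (Fin ℓ × Fin ℓ))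
    (hΨ : IsRootIdeal ℓ Ψ) (i j : Fin ℓ) (hij : (j : ℕ) = (i : ℕ) + 1)
    (hsym : ∀ p : Fin ℓ × Fin ℓ, p ∈ Ψ ↔ (Equiv.swap i j p.1, Equiv.swap i j p.2) ∈ Ψ)
    (γ : Fin ℓ → ℤ) :
    catalanH KK tt ℓ Ψ γ +
      catalanH KK tt ℓ Ψ (fun a =>
        γ (Equiv.swap i j a) + (if a = j then 1 else 0) - (if a = i then 1 else 0)) = 0 := by
  classical
  set σ := Equiv.swap i j with hσ
  have hinv : ∀ a, σ (σ a) = a := fun a => Equiv.swap_apply_self i j a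
  set e : (Fin ℓ × Fin ℓ → ℕ) → (Fin ℓ × Fin ℓ → ℕ) :=
    fun n q => n (σ q.1, σ q.2) with he
  have hee : Function.Involutive e := by
    intro n; funext q; simp [he, hinv]
  have hre : catalanH KK tt ℓ Ψ (fun a =>
      γ (σ a) + (if a = j then 1 else 0) - (if a = i then 1 else 0))
      = ∑ᶠ n : Fin ℓ × Fin ℓ → ℕ,
        (if ∀ q, q ∉ Ψ → e n q = 0 then
          (tt ^ (∑ q : Fin ℓ × Fin ℓ, e n q)) •
            sJT KK ℓ (fun a => (γ (σ a) + (if a = j then 1 else 0) -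
              (if a = i then 1 else 0)) +
              ∑ b : Fin ℓ, ((e n (a, b) : ℤ) - (e n (b, a) : ℤ)))
        else 0) := by
    rw [catalanH]
    exact (finsum_comp_equiv hee.toPerm).symm
  have hneg : ∀ n : Fin ℓ × Fin ℓ → ℕ,
      (if ∀ q, q ∉ Ψ → e n q = 0 then
          (tt ^ (∑ q : Fin ℓ × Fin ℓ, e n q)) •
            sJT KK ℓ (fun a => (γ (σ a) + (if a = j then 1 else 0) -
              (if a = i then 1 else 0)) +
              ∑ b : Fin ℓ, ((e n (a, b) : ℤ) - (e n (b, a) : ℤ)))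
        else 0)
      = - (if ∀ q, q ∉ Ψ → n q = 0 then
          (tt ^ (∑ q : Fin ℓ × Fin ℓ, n q)) •
            sJT KK ℓ (fun c => γ c + ∑ b : Fin ℓ, ((n (c, b) : ℤ) - (n (b, c) : ℤ)))
        else 0) := by
    intro n
    have hcond : (∀ q, q ∉ Ψ → e n q = 0) ↔ (∀ q, q ∉ Ψ → n q = 0) := by
      constructor
      · intro h q hq
        have hq' : (σ q.1, σ q.2) ∉ Ψ := by
          intro hmem
          exact hq (by rw [hsym (σ q.1, σ q.2)] at hmem; simpa [hinv] using hmem)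
        simpa [he, hinv] using h (σ q.1, σ q.2) hq'
      · intro h q hq
        exact h _ (fun hmem => hq ((hsym q).mpr hmem))
    have hsum : (∑ q : Fin ℓ × Fin ℓ, e n q) = ∑ q : Fin ℓ × Fin ℓ, n q :=
      Equiv.sum_comp (Equiv.prodCongr σ σ) n
    have hdrift : (fun a => (γ (σ a) + (if a = j then 1 else 0) -
          (if a = i then 1 else 0)) +
          ∑ b : Fin ℓ, ((e n (a, b) : ℤ) - (e n (b, a) : ℤ)))
        = (fun a =>
            (fun c => γ c + ∑ b : Fin ℓ, ((n (c, b) : ℤ) - (n (b, c) : ℤ))) (σ a)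
              + (if a = j then 1 else 0) - (if a = i then 1 else 0)) := by
      funext a
      have hb : (∑ b : Fin ℓ, ((e n (a, b) : ℤ) - (e n (b, a) : ℤ)))
          = ∑ b : Fin ℓ, ((n (σ a, b) : ℤ) - (n (b, σ a) : ℤ)) := by
        simpa [he] using Equiv.sum_comp σ
          (fun b => ((n (σ a, b) : ℤ) - (n (b, σ a) : ℤ)))
      rw [hb]; ring
    rw [hdrift]
    by_cases hc : ∀ q, q ∉ Ψ → n q = 0
    · rw [if_pos (hcond.mpr hc), if_pos hc, hsum,
        sJT_swap_row KK ℓ i j hij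
          (fun c => γ c + ∑ b : Fin ℓ, ((n (c, b) : ℤ) - (n (b, c) : ℤ))),
        smul_neg]
    · rw [if_neg (fun h => hc (hcond.mp h)), if_neg hc, neg_zero]
  rw [hre]
  simp only [hneg]
  rw [finsum_neg_distrib, catalanH, add_neg_cancel]
end

section
/- Let (Ψ, μ) be an indexed root ideal of length ℓ and z ∈ [ℓ−1]. If Ψ has a ceiling in columns z, z+1 (columns z and z+1 of Ψ have equal length), Ψ has a wall in rows z, z+1 (rows z and z+1 of Ψ have equal length), and μ_z = μ_{z+1} − 1, then the Catalan function H(Ψ; μ) = 0. -/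
open MvPolynomial Finset
open scoped Classical

/-- If the root ideal `Ψ` has a ceiling in columns `z, z+1` (equal column
lengths), a wall in rows `z, z+1` (equal row lengths), and `μ_z = μ_{z+1} − 1`,
then the Catalan function `H(Ψ; μ)` vanishes. -/
theorem catalan_wall_ceiling_zero (ℓ : ℕ) (Ψ : Finset (Fin ℓ × Fin ℓ))
    (hΨ : IsRootIdeal ℓ Ψ) (μ : Fin ℓ → ℤ) (z z1 : Fin ℓ) (hz : (z1 : ℕ) = (z : ℕ) + 1)
    (hceiling : (Ψ.filter fun p => p.2 = z).card = (Ψ.filter fun p => p.2 = z1).card)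
    (hwall : (Ψ.filter fun p => p.1 = z).card = (Ψ.filter fun p => p.1 = z1).card)
    (hμ : μ z = μ z1 - 1) :
    catalanH KK tt ℓ Ψ μ = 0 := by
  classical
  have hzz : z ≠ z1 := by
    intro h; rw [h] at hz; omega
  have hzle : z ≤ z1 := by
    rw [Fin.le_def]; omega
  have hcast : ((z1 : ℕ) : ℤ) = ((z : ℕ) : ℤ) + 1 := by exact_mod_cast hz
  set σ : Equiv.Perm (Fin ℓ) := Equiv.swap z z1 with hσdef
  -- column equality (ceiling)
  have hcol : ∀ i, (i, z) ∈ Ψ ↔ (i, z1) ∈ Ψ := by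
    have hfwd : ∀ i, (i, z) ∈ Ψ → (i, z1) ∈ Ψ := fun i h =>
      hΨ.2 (i, z) h (i, z1) le_rfl hzle
    have himg : (Ψ.filter fun p => p.2 = z).image (fun p => (p.1, z1)) =
        Ψ.filter fun p => p.2 = z1 := by
      apply Finset.eq_of_subset_of_card_le
      · intro q hq
        simp only [Finset.mem_image, Finset.mem_filter] at hq ⊢
        obtain ⟨p, ⟨hp, hp2⟩, rfl⟩ := hq
        refine ⟨hfwd p.1 ?_, rfl⟩
        rw [← hp2, Prod.mk.eta]; exact hp
      · rw [Finset.card_image_of_injOn, ← hceiling]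
        intro p hp q hq hpq
        simp only [Finset.mem_coe, Finset.mem_filter] at hp hq
        have hpq' : (p.1, z1) = (q.1, z1) := hpq
        have h1 : p.1 = q.1 := by simpa using hpq'
        exact Prod.ext h1 (hp.2.trans hq.2.symm)
    intro i
    refine ⟨hfwd i, fun h => ?_⟩
    have hmem : (i, z1) ∈ (Ψ.filter fun p => p.2 = z).image (fun p => (p.1, z1)) := by
      rw [himg]; simp [h]
    simp only [Finset.mem_image, Finset.mem_filter] at hmem
    obtain ⟨p, ⟨hp, hp2⟩, hpq⟩ := hmem
    have h1 : p.1 = i := by simpa using hpq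
    rw [← h1, ← hp2, Prod.mk.eta]; exact hp
  -- row equality (wall)
  have hrow : ∀ j, (z, j) ∈ Ψ ↔ (z1, j) ∈ Ψ := by
    have hfwd : ∀ j, (z1, j) ∈ Ψ → (z, j) ∈ Ψ := fun j h =>
      hΨ.2 (z1, j) h (z, j) hzle le_rfl
    have himg : (Ψ.filter fun p => p.1 = z1).image (fun p => (z, p.2)) =
        Ψ.filter fun p => p.1 = z := by
      apply Finset.eq_of_subset_of_card_le
      · intro q hq
        simp only [Finset.mem_image, Finset.mem_filter] at hq ⊢
        obtain ⟨p, ⟨hp, hp1⟩, rfl⟩ := hq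
        refine ⟨hfwd p.2 ?_, rfl⟩
        rw [← hp1, Prod.mk.eta]; exact hp
      · rw [Finset.card_image_of_injOn, hwall]
        intro p hp q hq hpq
        simp only [Finset.mem_coe, Finset.mem_filter] at hp hq
        have hpq' : (z, p.2) = (z, q.2) := hpq
        have h2 : p.2 = q.2 := by simpa using hpq'
        exact Prod.ext (hp.2.trans hq.2.symm) h2
    intro j
    refine ⟨fun h => ?_, hfwd j⟩
    have hmem : (z, j) ∈ (Ψ.filter fun p => p.1 = z1).image (fun p => (z, p.2)) := by
      rw [himg]; simp [h]
    simp only [Finset.mem_image, Finset.mem_filter] at hmem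
    obtain ⟨p, ⟨hp, hp1⟩, hpq⟩ := hmem
    have h2 : p.2 = j := by simpa using hpq
    rw [← h2, ← hp1, Prod.mk.eta]; exact hp
  -- Ψ invariance under σ × σ
  have hA : ∀ a b : Fin ℓ, (σ a, b) ∈ Ψ ↔ (a, b) ∈ Ψ := by
    intro a b
    rcases eq_or_ne a z with ha | ha1
    · rw [ha, hσdef, Equiv.swap_apply_left]; exact (hrow b).symm
    rcases eq_or_ne a z1 with ha | ha2
    · rw [ha, hσdef, Equiv.swap_apply_right]; exact hrow b
    · rw [hσdef, Equiv.swap_apply_of_ne_of_ne ha1 ha2]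
  have hB : ∀ a b : Fin ℓ, (a, σ b) ∈ Ψ ↔ (a, b) ∈ Ψ := by
    intro a b
    rcases eq_or_ne b z with hb | hb1
    · rw [hb, hσdef, Equiv.swap_apply_left]; exact (hcol a).symm
    rcases eq_or_ne b z1 with hb | hb2
    · rw [hb, hσdef, Equiv.swap_apply_right]; exact hcol a
    · rw [hσdef, Equiv.swap_apply_of_ne_of_ne hb1 hb2]
  have hinv : ∀ q : Fin ℓ × Fin ℓ, (σ q.1, σ q.2) ∈ Ψ ↔ q ∈ Ψ := fun q =>
    (hA q.1 (σ q.2)).trans (hB q.1 q.2)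
  -- the involution on multiplicity functions
  let τ : Fin ℓ × Fin ℓ → Fin ℓ × Fin ℓ := fun q => (σ q.1, σ q.2)
  have hττ : ∀ q, τ (τ q) = q := by
    intro q; simp only [τ, hσdef, Equiv.swap_apply_self]
  have hτinvol : Function.Involutive (fun n : Fin ℓ × Fin ℓ → ℕ => n ∘ τ) := by
    intro n; funext q; simp only [Function.comp_apply, hττ]
  let e : Equiv.Perm (Fin ℓ × Fin ℓ → ℕ) := hτinvol.toPerm _
  have hτbij : Function.Bijective τ :=
    ⟨fun a b h => by rw [← hττ a, h, hττ], fun q => ⟨τ q, hττ q⟩⟩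
  -- the summand
  set F : (Fin ℓ × Fin ℓ → ℕ) → SymFn KK := fun n =>
    if ∀ q, q ∉ Ψ → n q = 0 then
      (tt ^ (∑ q : Fin ℓ × Fin ℓ, n q)) •
        sJT KK ℓ (fun i => μ i + ∑ j : Fin ℓ, ((n (i, j) : ℤ) - (n (j, i) : ℤ)))
    else 0 with hF
  -- shift of μ minus index is σ-invariant
  have hμi : ∀ i : Fin ℓ, μ i - ((i : ℕ) : ℤ) = μ (σ i) - (((σ i : Fin ℓ) : ℕ) : ℤ) := by
    intro i
    rcases eq_or_ne i z with hi | hi1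
    · rw [hi, hσdef, Equiv.swap_apply_left, hμ, hcast]; ring
    rcases eq_or_ne i z1 with hi | hi2
    · rw [hi, hσdef, Equiv.swap_apply_right, hμ, hcast]; ring
    · rw [hσdef, Equiv.swap_apply_of_ne_of_ne hi1 hi2]
  have hsign : Equiv.Perm.sign σ = -1 := by
    rw [hσdef]; exact Equiv.Perm.sign_swap hzz
  have hkey : ∀ n, F (e n) = -F n := by
    intro n
    have he : e n = n ∘ τ := rfl
    rw [hF, he]
    simp only [Function.comp_apply]
    have hcond : (∀ q, q ∉ Ψ → n (τ q) = 0) ↔ (∀ q, q ∉ Ψ → n q = 0) := by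
      constructor
      · intro h q hq
        have hτq : τ q ∉ Ψ := by
          intro hmem
          exact hq (by rw [← hττ q]; exact (hinv (τ q)).mpr hmem)
        have h2 := h (τ q) hτq
        rwa [hττ q] at h2
      · intro h q hq
        exact h (τ q) (fun hm => hq ((hinv q).mp hm))
    by_cases hc : ∀ q, q ∉ Ψ → n q = 0
    · rw [if_pos (hcond.mpr hc), if_pos hc]
      have hsum : (∑ q : Fin ℓ × Fin ℓ, n (τ q)) = ∑ q : Fin ℓ × Fin ℓ, n q :=
        hτbij.sum_comp n
      set M : Matrix (Fin ℓ) (Fin ℓ) (SymFn KK) :=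
        Matrix.of fun i j : Fin ℓ =>
          hZ KK (μ i + (∑ j' : Fin ℓ, ((n (i, j') : ℤ) - (n (j', i) : ℤ)))
            + ((j : ℕ) : ℤ) - ((i : ℕ) : ℤ)) with hM
      have h1 : sJT KK ℓ (fun i => μ i + ∑ j : Fin ℓ,
            ((n (τ (i, j)) : ℤ) - (n (τ (j, i)) : ℤ))) = (M.submatrix σ id).det := by
        rw [sJT]
        congr 1
        funext i j
        simp only [Matrix.of_apply, Matrix.submatrix_apply, id, hM]
        congr 1
        have h4 : (∑ j' : Fin ℓ, ((n (τ (i, j')) : ℤ) - (n (τ (j', i)) : ℤ)))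
            = ∑ j' : Fin ℓ, ((n (σ i, j') : ℤ) - (n (j', σ i) : ℤ)) := by
          simp only [τ]
          exact Fintype.sum_equiv σ _ _ (fun j' => rfl)
        have h5 := hμi i
        rw [h4]
        linarith
      have h2 : sJT KK ℓ (fun i => μ i + ∑ j : Fin ℓ,
          ((n (i, j) : ℤ) - (n (j, i) : ℤ))) = M.det := rfl
      rw [hsum, h1, Matrix.det_permute, h2, hsign]
      simp
    · rw [if_neg (fun h => hc (hcond.mp h)), if_neg hc, neg_zero]
  have hcat : catalanH KK tt ℓ Ψ μ = ∑ᶠ n, F n := rfl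
  have h1 : (∑ᶠ n, F n) = ∑ᶠ n, F (e n) := (finsum_comp_equiv e).symm
  have h2 : (∑ᶠ n, F (e n)) = ∑ᶠ n, -F n := finsum_congr hkey
  have h3 : (∑ᶠ n, -F n) = -∑ᶠ n, F n := finsum_neg_distrib F
  have hzero : (∑ᶠ n, F n) + (∑ᶠ n, F n) = 0 := by
    nth_rewrite 1 [h1, h2, h3]
    exact neg_add_cancel _
  rw [hcat]
  haveI : CharZero KK := charZero_of_injective_algebraMap (algebraMap ℚ KK).injective
  haveI : CharZero (SymFn KK) := charZero_of_injective_algebraMap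
    (by rw [MvPolynomial.algebraMap_eq]; exact MvPolynomial.C_injective ℕ KK)
  exact add_self_eq_zero.mp hzero
end

section
/- Let (Ψ, μ) be an indexed root ideal. For any root β addable to Ψ (i.e., β ∉ Ψ and Ψ ∪ {β} is a root ideal), H(Ψ; μ) = H(Ψ ∪ β; μ) − t·H(Ψ ∪ β; μ + ε(β)), where ε((i,j)) = ε_i − ε_j. For any removable root α of Ψ (i.e., α ∈ Ψ and Ψ \ {α} is a root ideal), H(Ψ; μ) = H(Ψ \ α; μ) + t·H(Ψ; μ + ε(α)). -/
open MvPolynomial Finset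
open scoped Classical

noncomputable section CatalanAux

open Function

/-- The summand of the Catalan function. -/
def catF (ℓ : ℕ) (Ψ : Finset (Fin ℓ × Fin ℓ)) (γ : Fin ℓ → ℤ)
    (n : Fin ℓ × Fin ℓ → ℕ) : SymFn KK :=
  if ∀ q, q ∉ Ψ → n q = 0 then
    (tt ^ (∑ q : Fin ℓ × Fin ℓ, n q)) •
      sJT KK ℓ (fun i => γ i + ∑ j : Fin ℓ, ((n (i, j) : ℤ) - (n (j, i) : ℤ)))
  else 0

lemma catalanH_eq_finsum_catF (ℓ : ℕ) (Ψ : Finset (Fin ℓ × Fin ℓ)) (γ : Fin ℓ → ℤ) :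
    catalanH KK tt ℓ Ψ γ = ∑ᶠ n, catF ℓ Ψ γ n := rfl

lemma hZ_of_neg {K : Type} [Field K] {d : ℤ} (hd : d < 0) : hZ K d = 0 := by
  simp [hZ, not_le.2 hd]

lemma sJT_eq_zero_of_row {K : Type} [Field K] {ℓ : ℕ} {γ : Fin ℓ → ℤ} (i : Fin ℓ)
    (h : γ i + (ℓ : ℤ) - 1 - (i : ℤ) < 0) : sJT K ℓ γ = 0 := by
  apply Matrix.det_eq_zero_of_row_eq_zero i
  intro j
  have hj : (j : ℤ) ≤ (ℓ : ℤ) - 1 := by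
    have := j.isLt
    omega
  show hZ K (γ i + (j : ℤ) - (i : ℤ)) = 0
  exact hZ_of_neg (by omega)

lemma antisym_sum {ℓ : ℕ} (a : Fin ℓ → Fin ℓ → ℤ) (T : Finset (Fin ℓ)) :
    ∑ i ∈ T, ∑ j : Fin ℓ, (a i j - a j i) = ∑ i ∈ T, ∑ j ∈ Tᶜ, (a i j - a j i) := by
  have h1 : ∀ i : Fin ℓ, ∑ j : Fin ℓ, (a i j - a j i)
      = ∑ j ∈ T, (a i j - a j i) + ∑ j ∈ Tᶜ, (a i j - a j i) :=
    fun i => (Finset.sum_add_sum_compl T _).symm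
  simp only [h1, Finset.sum_add_distrib]
  have h0 : ∑ i ∈ T, ∑ j ∈ T, (a i j - a j i) = 0 := by
    have h2 : ∑ i ∈ T, ∑ j ∈ T, (a i j - a j i)
        = (∑ i ∈ T, ∑ j ∈ T, a i j) - (∑ i ∈ T, ∑ j ∈ T, a j i) := by
      simp [Finset.sum_sub_distrib]
    rw [h2, Finset.sum_comm (s := T) (t := T) (f := fun i j => a j i)]
    exact sub_self _
  rw [h0, zero_add]

lemma catF_support_finite (ℓ : ℕ) (Ψ : Finset (Fin ℓ × Fin ℓ))
    (hs : ∀ p ∈ Ψ, p.1 < p.2) (μ : Fin ℓ → ℤ) :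
    (Function.support (catF ℓ Ψ μ)).Finite := by
  set C : ℤ := (∑ i, μ i) + (ℓ : ℤ) * ℓ + ∑ i, |μ i| with hC
  apply Set.Finite.subset (Set.finite_Icc (0 : Fin ℓ × Fin ℓ → ℕ) (fun _ => C.toNat))
  intro n hn
  have hn' : catF ℓ Ψ μ n ≠ 0 := hn
  by_cases hcond : ∀ q, q ∉ Ψ → n q = 0
  swap
  · rw [catF, if_neg hcond] at hn'
    exact (hn' rfl).elim
  rw [catF, if_pos hcond] at hn'
  set γ : Fin ℓ → ℤ := fun i => μ i + ∑ j : Fin ℓ, ((n (i, j) : ℤ) - (n (j, i) : ℤ)) with hγ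
  have hsne : sJT KK ℓ γ ≠ 0 := fun h => hn' (by rw [h, smul_zero])
  have hγlb : ∀ i, -(ℓ : ℤ) ≤ γ i := by
    intro i
    by_contra hlt
    push_neg at hlt
    have hi0 : (0 : ℤ) ≤ (i : ℤ) := Int.ofNat_nonneg _
    exact hsne (sJT_eq_zero_of_row i (by omega))
  have key : ∀ T : Finset (Fin ℓ), ∑ i ∈ T, (γ i - μ i)
      = ∑ i ∈ T, ∑ j ∈ Tᶜ, ((n (i, j) : ℤ) - (n (j, i) : ℤ)) := by
    intro T
    have : ∀ i ∈ T, γ i - μ i = ∑ j : Fin ℓ, ((n (i, j) : ℤ) - (n (j, i) : ℤ)) := by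
      intro i _
      simp [hγ]
    rw [Finset.sum_congr rfl this]
    exact antisym_sum (fun i j => (n (i, j) : ℤ)) T
  have htot : ∑ i, γ i = ∑ i, μ i := by
    have := key Finset.univ
    simp only [Finset.compl_univ, Finset.sum_empty, Finset.sum_const_zero] at this
    have h2 : ∑ i, (γ i - μ i) = 0 := this
    rw [Finset.sum_sub_distrib] at h2
    omega
  refine Set.mem_Icc.2 ⟨fun q => Nat.zero_le _, fun q => ?_⟩
  by_cases hq0 : n q = 0
  · simp [hq0]
  have hqΨ : q ∈ Ψ := by
    by_contra hq
    exact hq0 (hcond q hq)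
  have hq12 : q.1 < q.2 := hs q hqΨ
  set T : Finset (Fin ℓ) := Finset.Iic q.1 with hT
  have hmemT : ∀ i : Fin ℓ, i ∈ T ↔ i ≤ q.1 := fun i => Finset.mem_Iic
  have hmemTc : ∀ i : Fin ℓ, i ∈ Tᶜ ↔ q.1 < i := by
    intro i
    rw [Finset.mem_compl, hmemT]
    exact not_le
  -- the inner terms: n (j, i) = 0 for i ∈ T, j ∈ Tᶜ
  have hzero : ∀ i ∈ T, ∀ j ∈ Tᶜ, (n (j, i) : ℤ) = 0 := by
    intro i hi j hj
    have hij : i < j := lt_of_le_of_lt ((hmemT i).1 hi) ((hmemTc j).1 hj)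
    have : (j, i) ∉ Ψ := fun hmem => absurd (hs _ hmem) (by simp; exact le_of_lt hij)
    simp [hcond _ this]
  have hkey : ∑ i ∈ T, (γ i - μ i) = ∑ i ∈ T, ∑ j ∈ Tᶜ, (n (i, j) : ℤ) := by
    rw [key T]
    refine Finset.sum_congr rfl fun i hi => Finset.sum_congr rfl fun j hj => ?_
    rw [hzero i hi j hj, sub_zero]
  have hle : (n q : ℤ) ≤ ∑ i ∈ T, ∑ j ∈ Tᶜ, (n (i, j) : ℤ) := by
    have h1 : (n q : ℤ) ≤ ∑ j ∈ Tᶜ, (n (q.1, j) : ℤ) := by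
      have := Finset.single_le_sum (f := fun j => (n (q.1, j) : ℤ))
        (fun j _ => Int.ofNat_nonneg _) ((hmemTc q.2).2 hq12)
      simpa using this
    calc (n q : ℤ) ≤ ∑ j ∈ Tᶜ, (n (q.1, j) : ℤ) := h1
      _ ≤ ∑ i ∈ T, ∑ j ∈ Tᶜ, (n (i, j) : ℤ) :=
        Finset.single_le_sum (f := fun i => ∑ j ∈ Tᶜ, (n (i, j) : ℤ))
          (fun i _ => Finset.sum_nonneg fun j _ => Int.ofNat_nonneg _)
          ((hmemT q.1).2 le_rfl)
  -- bound ∑_{i ∈ T} γ i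
  have hTc : ∑ i ∈ Tᶜ, γ i ≥ -((ℓ : ℤ) * ℓ) := by
    have h1 : ∑ i ∈ Tᶜ, (-(ℓ : ℤ)) ≤ ∑ i ∈ Tᶜ, γ i :=
      Finset.sum_le_sum fun i _ => hγlb i
    have h2 : ∑ i ∈ Tᶜ, (-(ℓ : ℤ)) = -((Tᶜ.card : ℤ) * ℓ) := by
      rw [Finset.sum_const]
      simp only [nsmul_eq_mul]
      ring
    have h3 : (Tᶜ.card : ℤ) ≤ ℓ := by
      have := Finset.card_le_univ Tᶜ
      simp only [Finset.card_univ, Fintype.card_prod, Fintype.card_fin] at this ⊢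
      exact_mod_cast le_trans this (by simp)
    nlinarith [Int.ofNat_nonneg ℓ]
  have hsplit : ∑ i ∈ T, γ i + ∑ i ∈ Tᶜ, γ i = ∑ i, γ i := Finset.sum_add_sum_compl T γ
  have hμT : -(∑ i ∈ T, μ i) ≤ ∑ i, |μ i| := by
    have h1 : ∀ i ∈ T, -|μ i| ≤ μ i := fun i _ => neg_abs_le _
    have h2 : -(∑ i ∈ T, μ i) ≤ ∑ i ∈ T, |μ i| := by
      have := Finset.sum_le_sum h1
      rw [Finset.sum_neg_distrib] at this
      omega
    have h3 : ∑ i ∈ T, |μ i| ≤ ∑ i, |μ i| :=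
      Finset.sum_le_sum_of_subset_of_nonneg (Finset.subset_univ T)
        (fun i _ _ => abs_nonneg _)
    omega
  have hfinal : (n q : ℤ) ≤ C := by
    rw [← hkey, Finset.sum_sub_distrib] at hle
    linarith
  show n q ≤ C.toNat
  omega

lemma catalan_key (ℓ : ℕ) (Ψ : Finset (Fin ℓ × Fin ℓ))
    (hs : ∀ p ∈ Ψ, p.1 < p.2) (β : Fin ℓ × Fin ℓ) (hβ : β ∈ Ψ) (μ : Fin ℓ → ℤ) :
    catalanH KK tt ℓ Ψ μ =
      catalanH KK tt ℓ (Ψ.erase β) μ +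
        tt • catalanH KK tt ℓ Ψ
          (fun a => μ a + (if a = β.1 then 1 else 0) - (if a = β.2 then 1 else 0)) := by
  set μ' : Fin ℓ → ℤ :=
    fun a => μ a + (if a = β.1 then 1 else 0) - (if a = β.2 then 1 else 0) with hμ'
  set f := catF ℓ Ψ μ with hf
  set g : (Fin ℓ × Fin ℓ → ℕ) → SymFn KK := fun n => if n β = 0 then f n else 0 with hg
  set h : (Fin ℓ × Fin ℓ → ℕ) → SymFn KK := fun n => if n β = 0 then 0 else f n with hh
  have hfin : (Function.support f).Finite := catF_support_finite ℓ Ψ hs μ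
  have hgfin : (Function.support g).Finite := by
    apply hfin.subset
    intro n hn
    have hn' : g n ≠ 0 := hn
    show f n ≠ 0
    intro hf0
    apply hn'
    simp [hg, hf0]
  have hhfin : (Function.support h).Finite := by
    apply hfin.subset
    intro n hn
    have hn' : h n ≠ 0 := hn
    show f n ≠ 0
    intro hf0
    apply hn'
    simp [hh, hf0]
  set shift : (Fin ℓ × Fin ℓ → ℕ) → (Fin ℓ × Fin ℓ → ℕ) :=
    fun n => Function.update n β (n β + 1) with hshift
  have hshift_apply : ∀ n p, shift n p = n p + (if p = β then 1 else 0) := by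
    intro n p
    by_cases hp : p = β
    · subst hp; simp [hshift]
    · simp [hshift, Function.update_of_ne hp, hp]
  have hinj : Function.Injective shift := by
    intro a b hab
    funext p
    have h1 := congrFun hab p
    rw [hshift_apply, hshift_apply] at h1
    by_cases hp : p = β
    · subst hp
      simp only [if_pos rfl] at h1
      omega
    · simp only [if_neg hp] at h1
      omega
  have hrange : ∀ n, h n ≠ 0 → n ∈ Set.range shift := by
    intro n hn
    have hnb : n β ≠ 0 := by
      intro h0
      apply hn
      simp [hh, h0]
    refine ⟨Function.update n β (n β - 1), ?_⟩
    funext p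
    rw [hshift_apply]
    by_cases hp : p = β
    · subst hp
      rw [Function.update_self, if_pos rfl]
      omega
    · simp [Function.update_of_ne hp, hp]
  have hgeq : ∀ n, g n = catF ℓ (Ψ.erase β) μ n := by
    intro n
    by_cases h0 : n β = 0
    · by_cases hc : ∀ q, q ∉ Ψ → n q = 0
      · have hc' : ∀ q, q ∉ Ψ.erase β → n q = 0 := by
          intro q hq
          by_cases hqβ : q = β
          · subst hqβ; exact h0
          · exact hc q (fun hmem => hq (Finset.mem_erase.2 ⟨hqβ, hmem⟩))
        simp only [hg, if_pos h0, hf, catF, if_pos hc, if_pos hc']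
      · have hc' : ¬ ∀ q, q ∉ Ψ.erase β → n q = 0 := by
          intro hc2
          exact hc fun q hq => hc2 q fun hmem => hq (Finset.mem_of_mem_erase hmem)
        simp only [hg, if_pos h0, hf, catF, if_neg hc, if_neg hc']
    · have hc' : ¬ ∀ q, q ∉ Ψ.erase β → n q = 0 := by
        intro hc2
        exact h0 (hc2 β (Finset.notMem_erase β Ψ))
      simp only [hg, if_neg h0, catF, if_neg hc']
  have hcomp : ∀ n, catF ℓ Ψ μ (shift n) = tt • catF ℓ Ψ μ' n := by
    intro n
    have hcond : (∀ q, q ∉ Ψ → shift n q = 0) ↔ (∀ q, q ∉ Ψ → n q = 0) := by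
      constructor <;> intro hc q hq
      · have h1 := hc q hq
        rw [hshift_apply] at h1
        have hqβ : q ≠ β := fun e => hq (e ▸ hβ)
        simpa [hqβ] using h1
      · rw [hshift_apply]
        have hqβ : q ≠ β := fun e => hq (e ▸ hβ)
        simp [hqβ, hc q hq]
    by_cases hc : ∀ q, q ∉ Ψ → n q = 0
    · rw [catF, catF, if_pos hc, if_pos (hcond.2 hc)]
      have hsum : ∑ q : Fin ℓ × Fin ℓ, shift n q = (∑ q : Fin ℓ × Fin ℓ, n q) + 1 := by
        simp only [hshift_apply]
        rw [Finset.sum_add_distrib]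
        simp
      have hγ : (fun i => μ i + ∑ j : Fin ℓ, ((shift n (i, j) : ℤ) - (shift n (j, i) : ℤ)))
          = fun i => μ' i + ∑ j : Fin ℓ, ((n (i, j) : ℤ) - (n (j, i) : ℤ)) := by
        funext i
        have hterm : ∀ j : Fin ℓ, ((shift n (i, j) : ℤ) - (shift n (j, i) : ℤ))
            = ((n (i, j) : ℤ) - (n (j, i) : ℤ))
              + ((if (i, j) = β then (1 : ℤ) else 0) - (if (j, i) = β then (1 : ℤ) else 0)) := by
          intro j
          rw [hshift_apply, hshift_apply]
          split <;> split <;> push_cast <;> ring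
        rw [Finset.sum_congr rfl fun j _ => hterm j, Finset.sum_add_distrib,
          Finset.sum_sub_distrib, Finset.sum_sub_distrib]
        have h1 : ∑ j : Fin ℓ, (if (i, j) = β then (1 : ℤ) else 0)
            = if i = β.1 then 1 else 0 := by
          rcases β with ⟨b1, b2⟩
          simp only [Prod.mk.injEq]
          by_cases hi : i = b1
          · subst hi; simp
          · simp [hi]
        have h2 : ∑ j : Fin ℓ, (if (j, i) = β then (1 : ℤ) else 0)
            = if i = β.2 then 1 else 0 := by
          rcases β with ⟨b1, b2⟩
          simp only [Prod.mk.injEq]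
          by_cases hi : i = b2
          · subst hi; simp
          · simp [hi]
        rw [h1, h2]
        simp only [hμ']
        ring
      rw [hsum, hγ, pow_succ', mul_smul]
    · rw [catF, catF, if_neg hc, if_neg fun hcc => hc (hcond.1 hcc), smul_zero]
  have hstep : catalanH KK tt ℓ Ψ μ = (∑ᶠ n, g n) + ∑ᶠ n, h n := by
    rw [catalanH_eq_finsum_catF, ← finsum_add_distrib hgfin hhfin]
    apply finsum_congr
    intro n
    by_cases h0 : n β = 0 <;> simp [hg, hh, h0, hf]
  have hgsum : (∑ᶠ n, g n) = catalanH KK tt ℓ (Ψ.erase β) μ := by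
    rw [catalanH_eq_finsum_catF]
    exact finsum_congr hgeq
  have hhsum : (∑ᶠ n, h n) = tt • catalanH KK tt ℓ Ψ μ' := by
    have e1 : (∑ᶠ n, h n) = ∑ᶠ n ∈ Set.range shift, h n := by
      rw [← finsum_mem_univ]
      exact finsum_mem_inter_support_eq' h Set.univ (Set.range shift)
        fun n hn => by simp [hrange n hn]
    have e3 : ∀ n, h (shift n) = tt • catF ℓ Ψ μ' n := by
      intro n
      have hns : shift n β ≠ 0 := by
        rw [hshift_apply]
        simp
      have h4 : h (shift n) = f (shift n) := by simp [hh, hns]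
      rw [h4, hf, hcomp n]
    rw [e1, finsum_mem_range hinj, finsum_congr e3,
      ← smul_finsum' tt (catF_support_finite ℓ Ψ hs μ'), ← catalanH_eq_finsum_catF]
  rw [hstep, hgsum, hhsum]

end CatalanAux

/-- **Recurrences for Catalan functions.** For a root β addable to `Ψ`:
`H(Ψ; μ) = H(Ψ ∪ β; μ) − t·H(Ψ ∪ β; μ + ε(β))`; and for a removable root `α` of
`Ψ`: `H(Ψ; μ) = H(Ψ \ α; μ) + t·H(Ψ; μ + ε(α))`, where `ε((i,j)) = ε_i − ε_j`. -/
theorem catalan_recurrences (ℓ : ℕ) (Ψ : Finset (Fin ℓ × Fin ℓ))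
    (hΨ : IsRootIdeal ℓ Ψ) (μ : Fin ℓ → ℤ) :
    (∀ β : Fin ℓ × Fin ℓ, β ∉ Ψ → IsRootIdeal ℓ (insert β Ψ) →
      catalanH KK tt ℓ Ψ μ =
        catalanH KK tt ℓ (insert β Ψ) μ -
          tt • catalanH KK tt ℓ (insert β Ψ)
            (fun a => μ a + (if a = β.1 then 1 else 0) - (if a = β.2 then 1 else 0))) ∧
    (∀ α ∈ Ψ, IsRootIdeal ℓ (Ψ.erase α) →
      catalanH KK tt ℓ Ψ μ =
        catalanH KK tt ℓ (Ψ.erase α) μ +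
          tt • catalanH KK tt ℓ Ψ
            (fun a => μ a + (if a = α.1 then 1 else 0) - (if a = α.2 then 1 else 0))) := by
  constructor
  · intro β hβ hins
    have hs' : ∀ p ∈ insert β Ψ, p.1 < p.2 := hins.1
    have hkey := catalan_key ℓ (insert β Ψ) hs' β (Finset.mem_insert_self β Ψ) μ
    rw [Finset.erase_insert hβ] at hkey
    exact eq_sub_of_add_eq hkey.symm
  · intro α hα _
    exact catalan_key ℓ Ψ hΨ.1 α hα μ
end

section
/- The Garsia–Jing operators satisfy e_d^⊥ B_m = B_m e_d^⊥ + B_{m-1} e_{d-1}^⊥ for all d ≥ 0 and m ∈ ℤ, and consequently for γ ∈ ℤ^ℓ, e_d^⊥ B_{γ_1}⋯B_{γ_ℓ} = Σ_{S ⊆ [ℓ], |S| ≤ d} B_{γ − ε_S} e_{d−|S|}^⊥, where B_{γ−ε_S} = B_{(γ−ε_S)_1}⋯B_{(γ−ε_S)_ℓ} and ε_S = Σ_{i∈S} ε_i. -/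
open MvPolynomial Finset
open scoped Classical

section Aux

noncomputable section

open Finset MvPolynomial

namespace JingAux

instance : CharZero KK :=
  charZero_of_injective_algebraMap (algebraMap ℚ (RatFunc ℚ)).injective

/-- The operator `p_{k+1}^⊥ = (k+1) ∂/∂p_{k+1}` as an endomorphism. -/
noncomputable def pdeE (k : ℕ) : Module.End KK (SymFn KK) :=
  ((k : KK) + 1) • (MvPolynomial.pderiv k).toLinearMap

lemma zee_ne_zero (m : ℕ →₀ ℕ) : zee KK m ≠ 0 := by
  unfold zee
  apply Finsupp.prod_ne_zero_iff.mpr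
  intro n _
  apply mul_ne_zero
  · apply pow_ne_zero
    have : ((n : KK) + 1) = ((n + 1 : ℕ) : KK) := by push_cast; ring
    rw [this]
    exact Nat.cast_ne_zero.mpr (Nat.succ_ne_zero n)
  · exact Nat.cast_ne_zero.mpr (Nat.factorial_ne_zero _)

lemma hall_eq_sum_superset (f g : SymFn KK) (s : Finset (ℕ →₀ ℕ)) (hs : f.support ⊆ s) :
    hall KK f g = ∑ m ∈ s, MvPolynomial.coeff m f * MvPolynomial.coeff m g * zee KK m := by
  unfold hall
  refine Finset.sum_subset hs ?_
  intro m _ hm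
  rw [MvPolynomial.notMem_support_iff.mp hm]
  ring

lemma hall_add_left (f₁ f₂ g : SymFn KK) :
    hall KK (f₁ + f₂) g = hall KK f₁ g + hall KK f₂ g := by
  rw [hall_eq_sum_superset (f₁ + f₂) g (f₁.support ∪ f₂.support) MvPolynomial.support_add,
      hall_eq_sum_superset f₁ g (f₁.support ∪ f₂.support) Finset.subset_union_left,
      hall_eq_sum_superset f₂ g (f₁.support ∪ f₂.support) Finset.subset_union_right,
      ← Finset.sum_add_distrib]
  apply Finset.sum_congr rfl
  intro m _
  rw [MvPolynomial.coeff_add]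
  ring

lemma hall_smul_left (c : KK) (f g : SymFn KK) :
    hall KK (c • f) g = c * hall KK f g := by
  rw [hall_eq_sum_superset (c • f) g f.support MvPolynomial.support_smul]
  unfold hall
  rw [Finset.mul_sum]
  apply Finset.sum_congr rfl
  intro m _
  rw [MvPolynomial.coeff_smul]
  simp [smul_eq_mul]; ring

lemma hall_zero_left (g : SymFn KK) : hall KK 0 g = 0 := by
  unfold hall; simp

lemma hall_sum_left {ι : Type*} (s : Finset ι) (f : ι → SymFn KK) (g : SymFn KK) :
    hall KK (∑ i ∈ s, f i) g = ∑ i ∈ s, hall KK (f i) g := by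
  induction s using Finset.cons_induction with
  | empty => simp [hall_zero_left]
  | cons a s ha ih => rw [Finset.sum_cons, hall_add_left, ih, Finset.sum_cons]

lemma hall_add_right (f g₁ g₂ : SymFn KK) :
    hall KK f (g₁ + g₂) = hall KK f g₁ + hall KK f g₂ := by
  unfold hall
  rw [← Finset.sum_add_distrib]
  apply Finset.sum_congr rfl
  intro m _
  rw [MvPolynomial.coeff_add]; ring

lemma hall_smul_right (c : KK) (f g : SymFn KK) :
    hall KK f (c • g) = c * hall KK f g := by
  unfold hall
  rw [Finset.mul_sum]
  apply Finset.sum_congr rfl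
  intro m _
  rw [MvPolynomial.coeff_smul]
  simp [smul_eq_mul]; ring

lemma hall_monomial_right (f : SymFn KK) (m : ℕ →₀ ℕ) :
    hall KK f (MvPolynomial.monomial m 1) = MvPolynomial.coeff m f * zee KK m := by
  unfold hall
  rw [Finset.sum_eq_single m]
  · simp [MvPolynomial.coeff_monomial]
  · intro b _ hb
    simp [MvPolynomial.coeff_monomial, Ne.symm hb]
  · intro hm
    rw [MvPolynomial.notMem_support_iff.mp hm]
    ring

/-- Nondegeneracy of the Hall pairing in the first slot. -/
lemma hall_ext {f₁ f₂ : SymFn KK} (h : ∀ g, hall KK f₁ g = hall KK f₂ g) : f₁ = f₂ := by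
  apply MvPolynomial.ext
  intro m
  have := h (MvPolynomial.monomial m 1)
  rw [hall_monomial_right, hall_monomial_right] at this
  exact mul_right_cancel₀ (zee_ne_zero m) this

lemma zee_add_single (m : ℕ →₀ ℕ) (k : ℕ) :
    zee KK (m + Finsupp.single k 1) = ((k : KK) + 1) * ((m k : KK) + 1) * zee KK m := by
  classical
  unfold zee
  set φ : ℕ → ℕ → KK := fun n j => ((n : KK) + 1) ^ j * (Nat.factorial j : KK) with hφ
  have hφ0 : ∀ n, φ n 0 = 1 := by intro n; simp [hφ]
  have h1 : (m + Finsupp.single k 1).support ⊆ insert k m.support := by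
    intro x hx
    rcases Finset.mem_union.mp (Finsupp.support_add hx) with h | h
    · exact Finset.mem_insert_of_mem h
    · simp [Finsupp.support_single_ne_zero k one_ne_zero] at h
      simp [h]
  have h2 : m.support ⊆ insert k m.support := Finset.subset_insert _ _
  rw [Finsupp.prod_of_support_subset _ h1 φ (fun n _ => hφ0 n),
      Finsupp.prod_of_support_subset _ h2 φ (fun n _ => hφ0 n)]
  have hk : k ∈ insert k m.support := Finset.mem_insert_self _ _
  rw [← Finset.mul_prod_erase _ _ hk, ← Finset.mul_prod_erase _ (fun x => φ x (m x)) hk]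
  have herase : ∏ x ∈ (insert k m.support).erase k, φ x (((m + Finsupp.single k 1) : ℕ →₀ ℕ) x) =
      ∏ x ∈ (insert k m.support).erase k, φ x (m x) := by
    apply Finset.prod_congr rfl
    intro x hx
    have hxk : x ≠ k := Finset.ne_of_mem_erase hx
    simp [Finsupp.single_apply, hxk, Ne.symm hxk]
  rw [herase]
  have hval : ((m + Finsupp.single k 1) : ℕ →₀ ℕ) k = m k + 1 := by
    rw [Finsupp.add_apply, Finsupp.single_eq_same]
  rw [hval]
  have : φ k (m k + 1) = ((k : KK) + 1) * ((m k : KK) + 1) * φ k (m k) := by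
    simp only [hφ, pow_succ, Nat.factorial_succ]
    push_cast
    ring
  rw [this]
  ring

end JingAux

namespace JingAux

open Finset MvPolynomial

lemma hall_sum_right {ι : Type*} (s : Finset ι) (f : SymFn KK) (g : ι → SymFn KK) :
    hall KK f (∑ i ∈ s, g i) = ∑ i ∈ s, hall KK f (g i) := by
  induction s using Finset.cons_induction with
  | empty => unfold hall; simp
  | cons a s ha ih => rw [Finset.sum_cons, hall_add_right, ih, Finset.sum_cons]

lemma hall_monomial_monomial (a b : ℕ →₀ ℕ) (c c' : KK) :
    hall KK (MvPolynomial.monomial a c) (MvPolynomial.monomial b c') =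
      if a = b then c * c' * zee KK a else 0 := by
  rw [hall_eq_sum_superset _ _ {a} MvPolynomial.support_monomial_subset]
  rw [Finset.sum_singleton]
  simp only [MvPolynomial.coeff_monomial]
  by_cases h : a = b
  · simp [h]
  · simp [h, Ne.symm h]

lemma pdeE_apply (k : ℕ) (f : SymFn KK) :
    pdeE k f = ((k : KK) + 1) • MvPolynomial.pderiv k f := rfl

lemma hall_pdeE (k : ℕ) (f g : SymFn KK) :
    hall KK (pdeE k f) g = hall KK f (MvPolynomial.X k * g) := by
  classical
  -- reduce to monomials
  have key : ∀ (a b : ℕ →₀ ℕ) (c c' : KK),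
      hall KK (pdeE k (MvPolynomial.monomial a c)) (MvPolynomial.monomial b c') =
      hall KK (MvPolynomial.monomial a c) (MvPolynomial.X k * MvPolynomial.monomial b c') := by
    intro a b c c'
    have hX : (MvPolynomial.X k : SymFn KK) * MvPolynomial.monomial b c' =
        MvPolynomial.monomial (Finsupp.single k 1 + b) c' := by
      rw [MvPolynomial.X, MvPolynomial.monomial_mul, one_mul]
    rw [hX, pdeE_apply, MvPolynomial.pderiv_monomial, hall_smul_left,
        hall_monomial_monomial, hall_monomial_monomial]
    by_cases hk : a k = 0
    · have h1 : a - Finsupp.single k 1 = a := by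
        ext x
        simp only [Finsupp.tsub_apply, Finsupp.single_apply]
        rcases eq_or_ne k x with rfl | hx
        · omega
        · simp [hx]
      have h2 : a ≠ Finsupp.single k 1 + b := by
        intro h
        have := congrArg (fun m => m k) h
        simp [Finsupp.single_apply] at this
        omega
      rw [h1]
      simp [h2, hk]
    · have hle : Finsupp.single k 1 + (a - Finsupp.single k 1) = a := by
        ext x
        simp only [Finsupp.add_apply, Finsupp.tsub_apply, Finsupp.single_apply]
        rcases eq_or_ne k x with rfl | hx
        · simp; omega
        · simp [hx]
      have hiff : (a - Finsupp.single k 1 = b) ↔ (a = Finsupp.single k 1 + b) := by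
        constructor
        · intro h; rw [← h, hle]
        · intro h
          rw [h]
          ext x
          simp only [Finsupp.tsub_apply, Finsupp.add_apply, Finsupp.single_apply]
          omega
      by_cases hb : a - Finsupp.single k 1 = b
      · rw [if_pos hb, if_pos (hiff.mp hb)]
        have hz : zee KK a = ((k : KK) + 1) * ((((a - Finsupp.single k 1 : ℕ →₀ ℕ) k : ℕ) : KK) + 1) *
            zee KK (a - Finsupp.single k 1) := by
          conv_lhs => rw [← hle]
          rw [add_comm (Finsupp.single k 1) _, zee_add_single]
        rw [hz]
        have hak : ((a k : KK)) = (((a - Finsupp.single k 1 : ℕ →₀ ℕ) k : ℕ) : KK) + 1 := by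
          have : a k = (a - Finsupp.single k 1 : ℕ →₀ ℕ) k + 1 := by
            simp only [Finsupp.tsub_apply, Finsupp.single_apply]
            simp
            omega
          rw [this]; push_cast; ring
        rw [hak]
        ring
      · rw [if_neg hb, if_neg (fun h => hb (hiff.mpr h))]
        ring_nf
  -- now extend by bilinearity
  conv_lhs => rw [MvPolynomial.as_sum f, MvPolynomial.as_sum g]
  conv_rhs => rw [MvPolynomial.as_sum f, MvPolynomial.as_sum g]
  rw [map_sum, hall_sum_left, hall_sum_left]
  apply Finset.sum_congr rfl
  intro a _
  rw [Finset.mul_sum, hall_sum_right, hall_sum_right]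
  apply Finset.sum_congr rfl
  intro b _
  exact key a b _ _

end JingAux


namespace JingAux

open Finset MvPolynomial

lemma natKK_ne (d : ℕ) : ((d : KK) + 1) ≠ 0 := by
  have : ((d : KK) + 1) = ((d + 1 : ℕ) : KK) := by push_cast; ring
  rw [this]
  exact Nat.cast_ne_zero.mpr (Nat.succ_ne_zero d)

lemma pdeE_mul (k : ℕ) (f g : SymFn KK) :
    pdeE k (f * g) = pdeE k f * g + f * pdeE k g := by
  simp only [pdeE_apply, MvPolynomial.pderiv_mul, smul_add, smul_mul_assoc, mul_smul_comm]

lemma pdeE_one (k : ℕ) : pdeE k (1 : SymFn KK) = 0 := by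
  simp [pdeE_apply, MvPolynomial.pderiv_one]

lemma pdeE_X (k i : ℕ) :
    pdeE k (MvPolynomial.X i : SymFn KK) = if i = k then ((k : KK) + 1) • 1 else 0 := by
  rcases eq_or_ne i k with rfl | h
  · simp [pdeE_apply]
  · simp [pdeE_apply, MvPolynomial.pderiv_X_of_ne h, h]

lemma hcomp_succ (d : ℕ) :
    hcomp KK (d + 1) =
      ((d : KK) + 1)⁻¹ • ∑ i ∈ Finset.range (d + 1), MvPolynomial.X i * hcomp KK (d - i) := by
  rw [hcomp]

lemma newton_h (d : ℕ) :
    ∑ i ∈ Finset.range (d + 1), MvPolynomial.X i * hcomp KK (d - i) =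
      ((d : KK) + 1) • hcomp KK (d + 1) := by
  rw [hcomp_succ, smul_smul, mul_inv_cancel₀ (natKK_ne d), one_smul]

lemma pdeE_hcomp (k : ℕ) : ∀ n : ℕ,
    pdeE k (hcomp KK n) = if k + 1 ≤ n then hcomp KK (n - (k + 1)) else 0 := by
  intro n
  induction n using Nat.strong_induction_on with
  | _ n IH =>
    match n with
    | 0 => simp [hcomp, pdeE_one]
    | d + 1 =>
      rw [hcomp_succ, map_smul, map_sum]
      have expand : ∀ i ∈ Finset.range (d + 1),
          pdeE k (MvPolynomial.X i * hcomp KK (d - i)) =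
            (if i = k then ((k : KK) + 1) • hcomp KK (d - i) else 0) +
            (if i ∈ Finset.range (d - k) then MvPolynomial.X i * hcomp KK ((d - k - 1) - i)
              else 0) := by
        intro i hi
        rw [pdeE_mul, pdeE_X, IH (d - i) (by simp at hi; omega)]
        congr 1
        · split_ifs with h
          · rw [smul_mul_assoc, one_mul]
          · rw [zero_mul]
        · simp only [Finset.mem_range] at hi ⊢
          by_cases h : k + 1 ≤ d - i
          · rw [if_pos h, if_pos (by omega)]
            congr 2
            omega
          · rw [if_neg h, if_neg (by omega), mul_zero]
      rw [Finset.sum_congr rfl expand, Finset.sum_add_distrib]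
      by_cases hkd : k ≤ d
      · rw [if_pos (by omega : k + 1 ≤ d + 1)]
        have e1 : (∑ i ∈ Finset.range (d + 1),
            if i = k then ((k : KK) + 1) • hcomp KK (d - i) else 0) =
            ((k : KK) + 1) • hcomp KK (d - k) := by
          rw [Finset.sum_ite_eq' (Finset.range (d + 1)) k
            (fun i => ((k : KK) + 1) • hcomp KK (d - i))]
          rw [if_pos (Finset.mem_range.mpr (by omega))]
        have e2 : (∑ i ∈ Finset.range (d + 1),
            if i ∈ Finset.range (d - k) then MvPolynomial.X i * hcomp KK ((d - k - 1) - i)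
              else 0) = ((d - k : ℕ) : KK) • hcomp KK (d - k) := by
          rw [Finset.sum_ite_mem,
            Finset.inter_eq_right.mpr (Finset.range_subset_range.mpr (by omega))]
          rcases Nat.eq_zero_or_pos (d - k) with h0 | hpos
          · rw [h0]; simp
          · obtain ⟨e, he⟩ : ∃ e, d - k = e + 1 := ⟨d - k - 1, by omega⟩
            rw [he]
            simp only [Nat.add_sub_cancel]
            rw [newton_h e]
            norm_num
        rw [e1, e2, ← add_smul]
        have hc : ((k : KK) + 1) + ((d - k : ℕ) : KK) = (d : KK) + 1 := by
          push_cast [Nat.cast_sub hkd]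
          ring
        rw [hc, smul_smul, inv_mul_cancel₀ (natKK_ne d), one_smul]
        congr 1
        omega
      · rw [if_neg (by omega : ¬ k + 1 ≤ d + 1)]
        have e1 : (∑ i ∈ Finset.range (d + 1),
            if i = k then ((k : KK) + 1) • hcomp KK (d - i) else 0) = 0 := by
          apply Finset.sum_eq_zero
          intro i hi
          rw [if_neg]
          simp only [Finset.mem_range] at hi
          omega
        have e2 : (∑ i ∈ Finset.range (d + 1),
            if i ∈ Finset.range (d - k) then MvPolynomial.X i * hcomp KK ((d - k - 1) - i)
              else 0) = 0 := by
          apply Finset.sum_eq_zero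
          intro i hi
          rw [if_neg]
          simp only [Finset.mem_range]
          omega
        rw [e1, e2]
        simp

lemma pdeE_hZ (k : ℕ) (m : ℤ) : pdeE k (hZ KK m) = hZ KK (m - (k + 1)) := by
  unfold hZ
  by_cases hm : 0 ≤ m
  · rw [if_pos hm, pdeE_hcomp]
    by_cases h : 0 ≤ m - (k + 1)
    · rw [if_pos h, if_pos (by omega)]
      congr 1
      omega
    · rw [if_neg h, if_neg (by omega)]
  · rw [if_neg hm, if_neg (by omega), map_zero]

end JingAux


namespace JingAux

open Finset MvPolynomial

/-- `e_d^⊥` as an endomorphism, mirroring the Newton recursion for `esym`. -/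
noncomputable def EdE : ℕ → Module.End KK (SymFn KK)
  | 0 => 1
  | d + 1 => ((d : KK) + 1)⁻¹ •
      ∑ i ∈ Finset.range (d + 1), ((-1 : KK) ^ i) • (pdeE i * EdE (d - i))
termination_by d => d
decreasing_by omega

/-- `h_d^⊥` as an endomorphism, mirroring the Newton recursion for `hcomp`. -/
noncomputable def HdE : ℕ → Module.End KK (SymFn KK)
  | 0 => 1
  | d + 1 => ((d : KK) + 1)⁻¹ •
      ∑ i ∈ Finset.range (d + 1), (pdeE i * HdE (d - i))
termination_by d => d
decreasing_by omega

lemma EdE_zero_apply (f : SymFn KK) : EdE 0 f = f := by rw [EdE]; rfl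

lemma HdE_zero_apply (f : SymFn KK) : HdE 0 f = f := by rw [HdE]; rfl

lemma EdE_succ_apply (d : ℕ) (f : SymFn KK) :
    EdE (d + 1) f = ((d : KK) + 1)⁻¹ •
      ∑ i ∈ Finset.range (d + 1), ((-1 : KK) ^ i) • pdeE i (EdE (d - i) f) := by
  rw [EdE]
  simp [LinearMap.smul_apply, LinearMap.sum_apply, Module.End.mul_apply]

lemma HdE_succ_apply (d : ℕ) (f : SymFn KK) :
    HdE (d + 1) f = ((d : KK) + 1)⁻¹ •
      ∑ i ∈ Finset.range (d + 1), pdeE i (HdE (d - i) f) := by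
  rw [HdE]
  simp [LinearMap.smul_apply, LinearMap.sum_apply, Module.End.mul_apply]

lemma newton_E (d : ℕ) (f : SymFn KK) :
    ∑ i ∈ Finset.range (d + 1), ((-1 : KK) ^ i) • pdeE i (EdE (d - i) f) =
      ((d : KK) + 1) • EdE (d + 1) f := by
  rw [EdE_succ_apply, smul_smul, mul_inv_cancel₀ (natKK_ne d), one_smul]

lemma newton_H (d : ℕ) (f : SymFn KK) :
    ∑ i ∈ Finset.range (d + 1), pdeE i (HdE (d - i) f) =
      ((d : KK) + 1) • HdE (d + 1) f := by
  rw [HdE_succ_apply, smul_smul, mul_inv_cancel₀ (natKK_ne d), one_smul]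

lemma pderiv_comm' (i j : ℕ) (f : SymFn KK) :
    MvPolynomial.pderiv i (MvPolynomial.pderiv j f) =
      MvPolynomial.pderiv j (MvPolynomial.pderiv i f) := by
  induction f using MvPolynomial.induction_on' with
  | add p q hp hq => simp [map_add, hp, hq]
  | monomial m a =>
    simp only [MvPolynomial.pderiv_monomial]
    rcases eq_or_ne i j with rfl | hij
    · rfl
    · have h1 : m - Finsupp.single j 1 - Finsupp.single i 1 =
          m - Finsupp.single i 1 - Finsupp.single j 1 := by
        ext x
        simp only [Finsupp.tsub_apply]
        omega
      have h2 : (m - Finsupp.single j 1 : ℕ →₀ ℕ) i = m i := by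
        simp only [Finsupp.tsub_apply, Finsupp.single_apply, if_neg (Ne.symm hij)]
        omega
      have h3 : (m - Finsupp.single i 1 : ℕ →₀ ℕ) j = m j := by
        simp only [Finsupp.tsub_apply, Finsupp.single_apply, if_neg hij]
        omega
      rw [h1, h2, h3]
      ring_nf

lemma pdeE_comm (i j : ℕ) (f : SymFn KK) : pdeE i (pdeE j f) = pdeE j (pdeE i f) := by
  simp only [pdeE_apply, map_smul, pderiv_comm' i j]
  rw [smul_comm]

lemma comm_EdE_of_comm_pde (L : Module.End KK (SymFn KK))
    (hL : ∀ k f, L (pdeE k f) = pdeE k (L f)) :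
    ∀ d f, L (EdE d f) = EdE d (L f) := by
  intro d
  induction d using Nat.strong_induction_on with
  | _ d IH =>
    match d with
    | 0 => intro f; rw [EdE_zero_apply, EdE_zero_apply]
    | e + 1 =>
      intro f
      rw [EdE_succ_apply, EdE_succ_apply, map_smul, map_sum]
      congr 1
      apply Finset.sum_congr rfl
      intro i hi
      rw [map_smul, hL, IH (e - i) (by simp at hi; omega)]

lemma comm_HdE_of_comm_pde (L : Module.End KK (SymFn KK))
    (hL : ∀ k f, L (pdeE k f) = pdeE k (L f)) :
    ∀ d f, L (HdE d f) = HdE d (L f) := by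
  intro d
  induction d using Nat.strong_induction_on with
  | _ d IH =>
    match d with
    | 0 => intro f; rw [HdE_zero_apply, HdE_zero_apply]
    | e + 1 =>
      intro f
      rw [HdE_succ_apply, HdE_succ_apply, map_smul, map_sum]
      congr 1
      apply Finset.sum_congr rfl
      intro i hi
      rw [hL, IH (e - i) (by simp at hi; omega)]

lemma pdeE_EdE_comm (k d : ℕ) (f : SymFn KK) : pdeE k (EdE d f) = EdE d (pdeE k f) :=
  comm_EdE_of_comm_pde (pdeE k) (fun j f => pdeE_comm k j f) d f

lemma pdeE_HdE_comm (k d : ℕ) (f : SymFn KK) : pdeE k (HdE d f) = HdE d (pdeE k f) :=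
  comm_HdE_of_comm_pde (pdeE k) (fun j f => pdeE_comm k j f) d f

lemma EdE_HdE_comm (e d : ℕ) (f : SymFn KK) : EdE e (HdE d f) = HdE d (EdE e f) :=
  comm_HdE_of_comm_pde (EdE e) (fun k f => (pdeE_EdE_comm k e f).symm) d f

lemma EdE_EdE_comm (e d : ℕ) (f : SymFn KK) : EdE e (EdE d f) = EdE d (EdE e f) :=
  comm_EdE_of_comm_pde (EdE e) (fun k f => (pdeE_EdE_comm k e f).symm) d f

lemma esym_succ (d : ℕ) :
    esym KK (d + 1) = ((d : KK) + 1)⁻¹ •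
      ∑ i ∈ Finset.range (d + 1), ((-1 : KK) ^ i) • (MvPolynomial.X i * esym KK (d - i)) := by
  rw [esym]

lemma hall_EdE (d : ℕ) (f g : SymFn KK) :
    hall KK (EdE d f) g = hall KK f (esym KK d * g) := by
  induction d using Nat.strong_induction_on generalizing g with
  | _ d IH =>
    match d with
    | 0 =>
      rw [EdE_zero_apply]
      have : esym KK 0 = 1 := by rw [esym]
      rw [this, one_mul]
    | e + 1 =>
      rw [EdE_succ_apply, hall_smul_left, hall_sum_left, esym_succ,
          smul_mul_assoc, hall_smul_right, Finset.sum_mul, hall_sum_right]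
      congr 1
      apply Finset.sum_congr rfl
      intro i hi
      rw [hall_smul_left, hall_pdeE, IH (e - i) (by simp at hi; omega),
          smul_mul_assoc, hall_smul_right]
      congr 1
      rw [mul_assoc]
      ring_nf

lemma hcomp_zero : hcomp KK 0 = 1 := by rw [hcomp]

lemma hall_HdE (d : ℕ) (f g : SymFn KK) :
    hall KK (HdE d f) g = hall KK f (hcomp KK d * g) := by
  induction d using Nat.strong_induction_on generalizing g with
  | _ d IH =>
    match d with
    | 0 =>
      rw [HdE_zero_apply, hcomp_zero, one_mul]
    | e + 1 =>
      rw [HdE_succ_apply, hall_smul_left, hall_sum_left, hcomp_succ,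
          smul_mul_assoc, hall_smul_right, Finset.sum_mul, hall_sum_right]
      congr 1
      apply Finset.sum_congr rfl
      intro i hi
      rw [hall_pdeE, IH (e - i) (by simp at hi; omega)]
      congr 1
      ring_nf

lemma eZ_natCast (d : ℕ) : eZ KK (d : ℤ) = esym KK d := by
  unfold eZ
  rw [if_pos (Int.ofNat_nonneg d), Int.toNat_natCast]

lemma hZ_natCast (d : ℕ) : hZ KK (d : ℤ) = hcomp KK d := by
  unfold hZ
  rw [if_pos (Int.ofNat_nonneg d), Int.toNat_natCast]

end JingAux


namespace JingAux

open Finset MvPolynomial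

lemma EdE_one_apply (f : SymFn KK) : EdE 1 f = pdeE 0 f := by
  rw [EdE_succ_apply]
  simp [EdE_zero_apply]

lemma EdE_one_hZ (m : ℤ) : EdE 1 (hZ KK m) = hZ KK (m - 1) := by
  rw [EdE_one_apply, pdeE_hZ]
  norm_num

lemma EdE_hZ_eq_zero (e : ℕ) (he : 2 ≤ e) (m : ℤ) : EdE e (hZ KK m) = 0 := by
  induction e using Nat.strong_induction_on generalizing m with
  | _ e IH =>
    match e, he with
    | d + 1, he =>
      have hd : 1 ≤ d := by omega
      rw [EdE_succ_apply]
      have key : ∀ i ∈ Finset.range (d + 1),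
          ((-1 : KK) ^ i) • pdeE i (EdE (d - i) (hZ KK m)) =
            (if i = d - 1 then ((-1 : KK) ^ (d - 1)) • hZ KK (m - 1 - (d : ℤ)) else 0) +
            (if i = d then (-((-1 : KK) ^ (d - 1))) • hZ KK (m - 1 - (d : ℤ)) else 0) := by
        intro i hi
        simp only [Finset.mem_range] at hi
        rcases lt_trichotomy i (d - 1) with h | h | h
        · have h2 : 2 ≤ d - i := by omega
          rw [IH (d - i) (by omega) h2, map_zero, smul_zero,
              if_neg (by omega), if_neg (by omega), add_zero]
        · subst h
          have : d - (d - 1) = 1 := by omega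
          rw [this, EdE_one_hZ, pdeE_hZ, if_pos rfl, if_neg (by omega), add_zero]
          congr 2
          push_cast [Nat.cast_sub hd]
          ring
        · have hid : i = d := by omega
          rw [hid]
          have : d - d = 0 := by omega
          rw [this, EdE_zero_apply, pdeE_hZ, if_neg (by omega), if_pos rfl, zero_add]
          have hsign : ((-1 : KK) ^ d) = -((-1 : KK) ^ (d - 1)) := by
            conv_lhs => rw [show d = (d - 1) + 1 by omega]
            rw [pow_succ]
            ring
          rw [hsign]
          congr 2
          ring
      rw [Finset.sum_congr rfl key, Finset.sum_add_distrib,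
          Finset.sum_ite_eq' (Finset.range (d + 1)) (d - 1),
          Finset.sum_ite_eq' (Finset.range (d + 1)) d,
          if_pos (Finset.mem_range.mpr (by omega)), if_pos (Finset.mem_range.mpr (by omega))]
      rw [neg_smul, add_neg_cancel, smul_zero]

lemma sum_triangle_swap {M : Type*} [AddCommMonoid M] (n : ℕ) (F : ℕ → ℕ → M) :
    ∑ i ∈ Finset.range n, ∑ j ∈ Finset.range (n - i), F i j =
      ∑ j ∈ Finset.range n, ∑ i ∈ Finset.range (n - j), F i j := by
  rw [Finset.sum_sigma', Finset.sum_sigma']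
  apply Finset.sum_nbij' (i := fun p => ⟨p.2, p.1⟩) (j := fun p => ⟨p.2, p.1⟩)
  · intro a ha
    simp only [Finset.mem_sigma, Finset.mem_range] at ha ⊢
    omega
  · intro a ha
    simp only [Finset.mem_sigma, Finset.mem_range] at ha ⊢
    omega
  · intro a _; rfl
  · intro a _; rfl
  · intro a _; rfl

set_option maxHeartbeats 1000000 in
/-- Leibniz rule for `e^⊥`-type skewing operators. -/
lemma EdE_mul (d : ℕ) (f g : SymFn KK) :
    EdE d (f * g) = ∑ j ∈ Finset.range (d + 1), EdE j f * EdE (d - j) g := by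
  induction d using Nat.strong_induction_on generalizing f g with
  | _ d IH =>
    match d with
    | 0 => simp [EdE_zero_apply]
    | d + 1 =>
      rw [EdE_succ_apply]
      have step1 : ∀ i ∈ Finset.range (d + 1),
          ((-1 : KK) ^ i) • pdeE i (EdE (d - i) (f * g)) =
          (∑ j ∈ Finset.range ((d + 1) - i),
            ((-1 : KK) ^ i) • (pdeE i (EdE j f) * EdE (d - i - j) g)) +
          (∑ j ∈ Finset.range ((d + 1) - i),
            ((-1 : KK) ^ i) • (EdE j f * pdeE i (EdE (d - i - j) g))) := by
        intro i hi
        simp only [Finset.mem_range] at hi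
        rw [IH (d - i) (by omega) f g, map_sum, Finset.smul_sum]
        have hr : (d - i) + 1 = (d + 1) - i := by omega
        rw [← Finset.sum_add_distrib, hr]
        apply Finset.sum_congr rfl
        intro j hj
        rw [pdeE_mul, smul_add]
      rw [Finset.sum_congr rfl step1, Finset.sum_add_distrib]
      -- Block 1 : pde hits f
      have block1 : (∑ i ∈ Finset.range (d + 1), ∑ j ∈ Finset.range ((d + 1) - i),
            ((-1 : KK) ^ i) • (pdeE i (EdE j f) * EdE (d - i - j) g)) =
          ∑ b ∈ Finset.range (d + 1),
            (((d - b : ℕ) : KK) + 1) • (EdE ((d - b) + 1) f * EdE b g) := by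
        have reflect : ∀ i ∈ Finset.range (d + 1),
            (∑ j ∈ Finset.range ((d + 1) - i),
              ((-1 : KK) ^ i) • (pdeE i (EdE j f) * EdE (d - i - j) g)) =
            ∑ b ∈ Finset.range ((d + 1) - i),
              ((-1 : KK) ^ i) • (pdeE i (EdE ((d - i) - b) f) * EdE b g) := by
          intro i hi
          simp only [Finset.mem_range] at hi
          rw [← Finset.sum_range_reflect
            (fun b => ((-1 : KK) ^ i) • (pdeE i (EdE ((d - i) - b) f) * EdE b g)) ((d + 1) - i)]
          apply Finset.sum_congr rfl
          intro j hj
          simp only [Finset.mem_range] at hj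
          rw [show (d + 1) - i - 1 - j = d - i - j by omega,
              show (d - i) - (d - i - j) = j by omega]
        rw [Finset.sum_congr rfl reflect, sum_triangle_swap (d + 1)]
        apply Finset.sum_congr rfl
        intro b hb
        simp only [Finset.mem_range] at hb
        have inner : (∑ i ∈ Finset.range ((d + 1) - b),
            ((-1 : KK) ^ i) • (pdeE i (EdE ((d - i) - b) f) * EdE b g)) =
            (∑ i ∈ Finset.range ((d - b) + 1),
              ((-1 : KK) ^ i) • pdeE i (EdE ((d - b) - i) f)) * EdE b g := by
          rw [Finset.sum_mul]
          apply Finset.sum_congr (by rw [show (d + 1) - b = (d - b) + 1 by omega])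
          intro i hi
          simp only [Finset.mem_range] at hi
          rw [smul_mul_assoc, show (d - i) - b = (d - b) - i by omega]
        rw [inner, newton_E, smul_mul_assoc]
      -- Block 2 : pde hits g
      have block2 : (∑ i ∈ Finset.range (d + 1), ∑ j ∈ Finset.range ((d + 1) - i),
            ((-1 : KK) ^ i) • (EdE j f * pdeE i (EdE (d - i - j) g))) =
          ∑ j ∈ Finset.range (d + 1),
            (((d - j : ℕ) : KK) + 1) • (EdE j f * EdE ((d - j) + 1) g) := by
        rw [sum_triangle_swap (d + 1)]
        apply Finset.sum_congr rfl
        intro j hj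
        simp only [Finset.mem_range] at hj
        have inner : (∑ i ∈ Finset.range ((d + 1) - j),
            ((-1 : KK) ^ i) • (EdE j f * pdeE i (EdE (d - i - j) g))) =
            EdE j f * ∑ i ∈ Finset.range ((d - j) + 1),
              ((-1 : KK) ^ i) • pdeE i (EdE ((d - j) - i) g) := by
          rw [Finset.mul_sum]
          apply Finset.sum_congr (by rw [show (d + 1) - j = (d - j) + 1 by omega])
          intro i hi
          simp only [Finset.mem_range] at hi
          rw [mul_smul_comm, show d - i - j = (d - j) - i by omega]
        rw [inner, newton_E, mul_smul_comm]
      rw [block1, block2]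
      -- combine the two blocks
      have eq1 : (∑ b ∈ Finset.range (d + 1),
          (((d - b : ℕ) : KK) + 1) • (EdE ((d - b) + 1) f * EdE b g)) =
          ∑ k ∈ Finset.range (d + 2),
            ((k : ℕ) : KK) • (EdE k f * EdE ((d + 1) - k) g) := by
        rw [Finset.sum_range_succ'
          (fun k => ((k : ℕ) : KK) • (EdE k f * EdE ((d + 1) - k) g)) (d + 1)]
        simp only [Nat.cast_zero, zero_smul, add_zero]
        rw [← Finset.sum_range_reflect
          (fun i => (((i + 1 : ℕ)) : KK) • (EdE (i + 1) f * EdE ((d + 1) - (i + 1)) g)) (d + 1)]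
        apply Finset.sum_congr rfl
        intro b hb
        simp only [Finset.mem_range] at hb
        rw [show d + 1 - 1 - b = d - b by omega,
            show (d + 1) - ((d - b) + 1) = b by omega,
            show (((d - b + 1 : ℕ)) : KK) = ((d - b : ℕ) : KK) + 1 by push_cast; ring]
      have eq2 : (∑ j ∈ Finset.range (d + 1),
          (((d - j : ℕ) : KK) + 1) • (EdE j f * EdE ((d - j) + 1) g)) =
          ∑ k ∈ Finset.range (d + 2),
            (((d + 1 - k : ℕ)) : KK) • (EdE k f * EdE ((d + 1) - k) g) := by
        rw [Finset.sum_range_succ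
          (fun k => (((d + 1 - k : ℕ)) : KK) • (EdE k f * EdE ((d + 1) - k) g)) (d + 1)]
        simp only [Nat.sub_self, Nat.cast_zero, zero_smul, add_zero]
        apply Finset.sum_congr rfl
        intro j hj
        simp only [Finset.mem_range] at hj
        rw [show (d + 1) - j = (d - j) + 1 by omega,
            show (((d - j + 1 : ℕ)) : KK) = ((d - j : ℕ) : KK) + 1 by push_cast; ring]
      rw [eq1, eq2, ← Finset.sum_add_distrib]
      have eq3 : ∀ k ∈ Finset.range (d + 2),
          ((k : ℕ) : KK) • (EdE k f * EdE ((d + 1) - k) g) +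
            (((d + 1 - k : ℕ)) : KK) • (EdE k f * EdE ((d + 1) - k) g) =
          ((d : KK) + 1) • (EdE k f * EdE ((d + 1) - k) g) := by
        intro k hk
        simp only [Finset.mem_range] at hk
        rw [← add_smul]
        congr 1
        push_cast [Nat.cast_sub (by omega : k ≤ d + 1)]
        ring
      rw [Finset.sum_congr rfl eq3, ← Finset.smul_sum, smul_smul,
          inv_mul_cancel₀ (natKK_ne d), one_smul]

end JingAux


namespace JingAux

open Finset MvPolynomial

lemma EdE_hZ_mul (d : ℕ) (hd : 1 ≤ d) (m : ℤ) (f : SymFn KK) :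
    EdE d (hZ KK m * f) =
      hZ KK m * EdE d f + hZ KK (m - 1) * EdE (d - 1) f := by
  rw [EdE_mul]
  have key : ∀ j ∈ Finset.range (d + 1),
      EdE j (hZ KK m) * EdE (d - j) f =
        (if j = 0 then hZ KK m * EdE d f else 0) +
        (if j = 1 then hZ KK (m - 1) * EdE (d - 1) f else 0) := by
    intro j hj
    simp only [Finset.mem_range] at hj
    match j with
    | 0 => rw [EdE_zero_apply, if_pos rfl, if_neg (by omega), add_zero, Nat.sub_zero]
    | 1 => rw [EdE_one_hZ, if_neg (by omega), if_pos rfl, zero_add]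
    | (n + 2) =>
      rw [EdE_hZ_eq_zero (n + 2) (by omega) m, zero_mul,
          if_neg (by omega), if_neg (by omega), add_zero]
  rw [Finset.sum_congr rfl key, Finset.sum_add_distrib,
      Finset.sum_ite_eq' (Finset.range (d + 1)) 0,
      Finset.sum_ite_eq' (Finset.range (d + 1)) 1,
      if_pos (Finset.mem_range.mpr (by omega)), if_pos (Finset.mem_range.mpr (by omega))]

lemma ep_eq_EdE (ep : ℕ → Module.End KK (SymFn KK))
    (h : ∀ (d : ℕ) (f g : SymFn KK), hall KK (ep d f) g = hall KK f (eZ KK (d : ℤ) * g)) :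
    ∀ d f, ep d f = EdE d f := by
  intro d f
  apply hall_ext
  intro g
  rw [h, eZ_natCast, ← hall_EdE]

lemma hp_eq_HdE (hp : ℕ → Module.End KK (SymFn KK))
    (h : ∀ (d : ℕ) (f g : SymFn KK), hall KK (hp d f) g = hall KK f (hZ KK (d : ℤ) * g)) :
    ∀ d f, hp d f = HdE d f := by
  intro d f
  apply hall_ext
  intro g
  rw [h, hZ_natCast, ← hall_HdE]

lemma EdE_jingPartial (ep hp : ℕ → Module.End KK (SymFn KK))
    (hep : ∀ d f, ep d f = EdE d f) (hhp : ∀ d f, hp d f = HdE d f)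
    (d : ℕ) (hd : 1 ≤ d) (m : ℤ) (N : ℕ) (f : SymFn KK) :
    EdE d (jingPartial KK tt ep hp m N f) =
      jingPartial KK tt ep hp m N (EdE d f) +
        jingPartial KK tt ep hp (m - 1) N (EdE (d - 1) f) := by
  unfold jingPartial
  rw [map_sum, ← Finset.sum_add_distrib]
  apply Finset.sum_congr rfl
  intro i _
  rw [map_sum, ← Finset.sum_add_distrib]
  apply Finset.sum_congr rfl
  intro j _
  simp only [hep, hhp]
  rw [map_smul, EdE_hZ_mul d hd, smul_add]
  congr 2
  · rw [EdE_EdE_comm d i, EdE_HdE_comm d j]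
  · rw [EdE_EdE_comm (d - 1) i, EdE_HdE_comm (d - 1) j]
    congr 2
    ring

lemma part1 (ep hp : ℕ → Module.End KK (SymFn KK)) (B : ℤ → Module.End KK (SymFn KK))
    (hJing : IsJingFamily KK tt ep hp B) :
    ∀ (d : ℕ) (m : ℤ),
      ep d * B m = B m * ep d + B (m - 1) * (if d = 0 then 0 else ep (d - 1)) := by
  obtain ⟨hE, hH, hB⟩ := hJing
  have hep := ep_eq_EdE ep hE
  have hhp := hp_eq_HdE hp hH
  intro d m
  match d with
  | 0 =>
    have hone : ep 0 = 1 := by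
      apply LinearMap.ext
      intro f
      rw [hep 0 f, EdE_zero_apply, Module.End.one_apply]
    rw [if_pos rfl, hone, one_mul, mul_one, mul_zero, add_zero]
  | e + 1 =>
    rw [if_neg (Nat.succ_ne_zero e)]
    apply LinearMap.ext
    intro f
    simp only [Module.End.mul_apply, LinearMap.add_apply]
    obtain ⟨N1, h1⟩ := hB m f
    obtain ⟨N2, h2⟩ := hB m (ep (e + 1) f)
    obtain ⟨N3, h3⟩ := hB (m - 1) (ep ((e + 1) - 1) f)
    set N := max N1 (max N2 N3) with hN
    rw [h1 N (le_max_left _ _), h2 N (le_trans (le_max_left _ _) (le_max_right _ _)),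
        h3 N (le_trans (le_max_right _ _) (le_max_right _ _))]
    rw [hep (e + 1) _, EdE_jingPartial ep hp hep hhp (e + 1) (by omega) m N f]
    rw [hep (e + 1) f, hep ((e + 1) - 1) f]

end JingAux


namespace JingAux

open Finset MvPolynomial

lemma mem_map_succ {n : ℕ} (a : Fin n) (S : Finset (Fin n)) :
    a.succ ∈ S.map ⟨Fin.succ, Fin.succ_injective n⟩ ↔ a ∈ S := by
  simp only [Finset.mem_map, Function.Embedding.coeFn_mk]
  constructor
  · rintro ⟨b, hb, hba⟩
    rwa [← Fin.succ_injective n hba]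
  · intro ha
    exact ⟨a, ha, rfl⟩

lemma zero_not_mem_map_succ {n : ℕ} (S : Finset (Fin n)) :
    (0 : Fin (n + 1)) ∉ S.map ⟨Fin.succ, Fin.succ_injective n⟩ := by
  simp only [Finset.mem_map, Function.Embedding.coeFn_mk]
  rintro ⟨b, _, hb⟩
  exact Fin.succ_ne_zero b hb

lemma map_preimage_succ {n : ℕ} (t : Finset (Fin (n + 1))) (h0 : (0 : Fin (n + 1)) ∉ t) :
    (t.preimage Fin.succ ((Fin.succ_injective n).injOn)).map
        ⟨Fin.succ, Fin.succ_injective n⟩ = t := by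
  ext b
  rcases Fin.eq_zero_or_eq_succ b with rfl | ⟨a, rfl⟩
  · constructor
    · intro h
      exact absurd h (zero_not_mem_map_succ _)
    · intro h
      exact absurd h h0
  · rw [mem_map_succ, Finset.mem_preimage]

lemma sum_powerset_map {M : Type*} [AddCommMonoid M] (n : ℕ)
    (F : Finset (Fin (n + 1)) → M) :
    ∑ t ∈ ((Finset.univ : Finset (Fin n)).map ⟨Fin.succ, Fin.succ_injective n⟩).powerset, F t =
      ∑ S ∈ (Finset.univ : Finset (Fin n)).powerset,
        F (S.map ⟨Fin.succ, Fin.succ_injective n⟩) := by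
  classical
  have hnot : ∀ t ∈ ((Finset.univ : Finset (Fin n)).map
      ⟨Fin.succ, Fin.succ_injective n⟩).powerset, (0 : Fin (n + 1)) ∉ t := by
    intro t ht h0
    exact zero_not_mem_map_succ Finset.univ (Finset.mem_powerset.mp ht h0)
  apply Finset.sum_nbij'
    (i := fun t => t.preimage Fin.succ ((Fin.succ_injective n).injOn))
    (j := fun S => S.map ⟨Fin.succ, Fin.succ_injective n⟩)
  · intro t ht
    simp
  · intro S hS
    simp only [Finset.mem_powerset] at hS ⊢
    exact Finset.map_subset_map.mpr hS
  · intro t ht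
    exact map_preimage_succ t (hnot t ht)
  · intro S hS
    ext a
    simp only [Finset.mem_preimage, Function.Embedding.coeFn_mk]
    exact mem_map_succ a S
  · intro t ht
    rw [map_preimage_succ t (hnot t ht)]

lemma part2 (ep : ℕ → Module.End KK (SymFn KK)) (B : ℤ → Module.End KK (SymFn KK))
    (rel : ∀ (d : ℕ) (m : ℤ),
      ep d * B m = B m * ep d + B (m - 1) * (if d = 0 then 0 else ep (d - 1))) :
    ∀ (ℓ : ℕ) (γ : Fin ℓ → ℤ) (d : ℕ),
      ep d * (List.ofFn fun a : Fin ℓ => B (γ a)).prod =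
        ∑ S ∈ (Finset.univ : Finset (Fin ℓ)).powerset.filter (fun S => S.card ≤ d),
          (List.ofFn fun a : Fin ℓ =>
              B (γ a - (if a ∈ S then 1 else 0))).prod * ep (d - S.card) := by
  intro ℓ
  induction ℓ with
  | zero =>
    intro γ d
    have huniv : (Finset.univ : Finset (Fin 0)) = ∅ := Finset.univ_eq_empty
    rw [huniv, Finset.powerset_empty, Finset.filter_singleton, if_pos (by simp),
        Finset.sum_singleton]
    simp [List.ofFn_zero]
  | succ ℓ IH =>
    intro γ d
    -- split the product
    have hsplit : (List.ofFn fun a : Fin (ℓ + 1) => B (γ a)).prod =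
        B (γ 0) * (List.ofFn fun a : Fin ℓ => B (γ a.succ)).prod := by
      rw [List.ofFn_succ, List.prod_cons]
    -- the left side
    have hleft : ep d * (List.ofFn fun a : Fin (ℓ + 1) => B (γ a)).prod =
        B (γ 0) * (ep d * (List.ofFn fun a : Fin ℓ => B (γ a.succ)).prod) +
          B (γ 0 - 1) * ((if d = 0 then 0 else ep (d - 1)) *
            (List.ofFn fun a : Fin ℓ => B (γ a.succ)).prod) := by
      rw [hsplit, ← mul_assoc, rel d (γ 0), add_mul, mul_assoc, mul_assoc]
    have h1 : ep d * (List.ofFn fun a : Fin ℓ => B (γ a.succ)).prod =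
        ∑ S ∈ (Finset.univ : Finset (Fin ℓ)).powerset,
          (if S.card ≤ d then
            (List.ofFn fun a : Fin ℓ =>
              B (γ a.succ - (if a ∈ S then 1 else 0))).prod * ep (d - S.card)
          else 0) := by
      rw [IH (fun a => γ a.succ) d, Finset.sum_filter]
    have h2 : (if d = 0 then (0 : Module.End KK (SymFn KK)) else ep (d - 1)) *
        (List.ofFn fun a : Fin ℓ => B (γ a.succ)).prod =
        ∑ S ∈ (Finset.univ : Finset (Fin ℓ)).powerset,
          (if S.card + 1 ≤ d then
            (List.ofFn fun a : Fin ℓ =>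
              B (γ a.succ - (if a ∈ S then 1 else 0))).prod * ep (d - (S.card + 1))
          else 0) := by
      match d with
      | 0 =>
        rw [if_pos rfl, zero_mul]
        symm
        apply Finset.sum_eq_zero
        intro S _
        rw [if_neg (by omega)]
      | e + 1 =>
        rw [if_neg (Nat.succ_ne_zero e), Nat.add_sub_cancel, IH (fun a => γ a.succ) e,
            Finset.sum_filter]
        apply Finset.sum_congr rfl
        intro S _
        by_cases h : S.card ≤ e
        · rw [if_pos h, if_pos (by omega)]
          congr 2
          omega
        · rw [if_neg h, if_neg (by omega)]
    -- transform the right-hand side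
    have hR : (∑ S ∈ (Finset.univ : Finset (Fin (ℓ + 1))).powerset.filter
          (fun S => S.card ≤ d),
          (List.ofFn fun a : Fin (ℓ + 1) =>
              B (γ a - (if a ∈ S then 1 else 0))).prod * ep (d - S.card)) =
        (∑ S ∈ (Finset.univ : Finset (Fin ℓ)).powerset,
          B (γ 0) * (if S.card ≤ d then
            (List.ofFn fun a : Fin ℓ =>
              B (γ a.succ - (if a ∈ S then 1 else 0))).prod * ep (d - S.card)
          else 0)) +
        (∑ S ∈ (Finset.univ : Finset (Fin ℓ)).powerset,
          B (γ 0 - 1) * (if S.card + 1 ≤ d then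
            (List.ofFn fun a : Fin ℓ =>
              B (γ a.succ - (if a ∈ S then 1 else 0))).prod * ep (d - (S.card + 1))
          else 0)) := by
      rw [Finset.sum_filter, Fin.univ_succ, Finset.cons_eq_insert,
          Finset.sum_powerset_insert (zero_not_mem_map_succ Finset.univ),
          sum_powerset_map, sum_powerset_map]
      congr 1
      · apply Finset.sum_congr rfl
        intro S _
        rw [Finset.card_map]
        by_cases h : S.card ≤ d
        · rw [if_pos h, if_pos h]
          have hprod : (List.ofFn fun a : Fin (ℓ + 1) =>
              B (γ a - (if a ∈ S.map ⟨Fin.succ, Fin.succ_injective ℓ⟩ then 1 else 0))).prod =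
              B (γ 0) * (List.ofFn fun a : Fin ℓ =>
                B (γ a.succ - (if a ∈ S then 1 else 0))).prod := by
            rw [List.ofFn_succ, List.prod_cons]
            have hfun : (fun i : Fin ℓ =>
                B (γ i.succ - (if i.succ ∈ S.map ⟨Fin.succ, Fin.succ_injective ℓ⟩
                  then 1 else 0))) =
                (fun a : Fin ℓ => B (γ a.succ - (if a ∈ S then 1 else 0))) := by
              funext a
              rw [if_congr (mem_map_succ a S) rfl rfl]
            rw [hfun, if_neg (zero_not_mem_map_succ S), sub_zero]
          rw [hprod, mul_assoc]
        · rw [if_neg h, if_neg h, mul_zero]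
      · apply Finset.sum_congr rfl
        intro S _
        have hcard : (insert 0 (S.map ⟨Fin.succ, Fin.succ_injective ℓ⟩)).card = S.card + 1 := by
          rw [Finset.card_insert_of_notMem (zero_not_mem_map_succ S), Finset.card_map]
        rw [hcard]
        by_cases h : S.card + 1 ≤ d
        · rw [if_pos h, if_pos h]
          have hprod : (List.ofFn fun a : Fin (ℓ + 1) =>
              B (γ a - (if a ∈ insert 0 (S.map ⟨Fin.succ, Fin.succ_injective ℓ⟩)
                then 1 else 0))).prod =
              B (γ 0 - 1) * (List.ofFn fun a : Fin ℓ =>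
                B (γ a.succ - (if a ∈ S then 1 else 0))).prod := by
            rw [List.ofFn_succ, List.prod_cons]
            have hfun : (fun i : Fin ℓ =>
                B (γ i.succ - (if i.succ ∈ insert 0 (S.map ⟨Fin.succ, Fin.succ_injective ℓ⟩)
                  then 1 else 0))) =
                (fun a : Fin ℓ => B (γ a.succ - (if a ∈ S then 1 else 0))) := by
              funext a
              have hmem : a.succ ∈ insert 0 (S.map ⟨Fin.succ, Fin.succ_injective ℓ⟩) ↔
                  a ∈ S := by
                rw [Finset.mem_insert]
                constructor
                · rintro (h' | h')
                  · exact absurd h' (Fin.succ_ne_zero a)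
                  · exact (mem_map_succ a S).mp h'
                · intro h'
                  exact Or.inr ((mem_map_succ a S).mpr h')
              rw [if_congr hmem rfl rfl]
            rw [hfun, if_pos (Finset.mem_insert_self _ _)]
          rw [hprod, mul_assoc]
        · rw [if_neg h, if_neg h, mul_zero]
    rw [hleft, h1, h2, hR, Finset.mul_sum, Finset.mul_sum]

end JingAux


end

end Aux


/-- The Garsia–Jing operators satisfy
`e_d^⊥ B_m = B_m e_d^⊥ + B_{m-1} e_{d-1}^⊥` (with `e_{-1}^⊥ = 0`), and
consequently `e_d^⊥ B_{γ_1}⋯B_{γ_ℓ} = ∑_{S ⊆ [ℓ], |S| ≤ d} B_{γ−ε_S} e_{d−|S|}^⊥`. -/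
theorem eperp_jing_commutation
    (ep hp : ℕ → Module.End KK (SymFn KK)) (B : ℤ → Module.End KK (SymFn KK))
    (hJing : IsJingFamily KK tt ep hp B) :
    (∀ (d : ℕ) (m : ℤ),
      ep d * B m = B m * ep d + B (m - 1) * (if d = 0 then 0 else ep (d - 1))) ∧
    (∀ (ℓ : ℕ) (γ : Fin ℓ → ℤ) (d : ℕ),
      ep d * (List.ofFn fun a : Fin ℓ => B (γ a)).prod =
        ∑ S ∈ (Finset.univ : Finset (Fin ℓ)).powerset.filter (fun S => S.card ≤ d),
          (List.ofFn fun a : Fin ℓ =>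
              B (γ a - (if a ∈ S then 1 else 0))).prod * ep (d - S.card)) := by
  exact ⟨JingAux.part1 ep hp B hJing,
    JingAux.part2 ep B (JingAux.part1 ep hp B hJing)⟩
end

section
/- Let λ → κ/η ← μ be a skew-linking diagram: κ/η is a skew partition whose row lengths λ_i = κ_i − η_i form a partition λ and whose column lengths (the rows of the transpose of κ/η) form a partition μ. If κ_y = κ_{y+1} for some y, then η_y = η_{y+1} and λ_y = λ_{y+1}. If η_y = η_{y+1} > 0, then κ_{μ_{η_y} + y} = κ_{μ_{η_y} + y + 1}. -/
open MvPolynomial Finset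
open scoped Classical

/-- **Skew-linking diagram lemma.** Let `κ/η` be a skew diagram (entries
1-indexed, `κ` and `η` partitions with `η ⊆ κ`, `κ` finitely supported) whose
row lengths `κ_i − η_i` form a partition `lam` and whose column lengths `μ`
(rows of the transpose of `κ/η`) form a partition, i.e. a skew-linking diagram.
Then:
(1) if `κ_y = κ_{y+1}` then `η_y = η_{y+1}` and `lam_y = lam_{y+1}`; and
(2) if `η_y = η_{y+1} > 0` then `κ_{μ_{η_y}+y} = κ_{μ_{η_y}+y+1}`. -/
theorem skew_linking_equal_rows (κ η : ℕ → ℕ) (μ : ℕ → ℕ)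
    (hκanti : ∀ y z : ℕ, 1 ≤ y → y ≤ z → κ z ≤ κ y)
    (hηanti : ∀ y z : ℕ, 1 ≤ y → y ≤ z → η z ≤ η y)
    (hsub : ∀ z : ℕ, 1 ≤ z → η z ≤ κ z)
    (hfin : ∃ N, ∀ z ≥ N, κ z = 0)
    (hlamanti : ∀ y z : ℕ, 1 ≤ y → y ≤ z → κ z - η z ≤ κ y - η y)
    (hμ : ∀ c : ℕ, 1 ≤ c → μ c = Set.ncard {z : ℕ | 1 ≤ z ∧ η z < c ∧ c ≤ κ z})
    (hμanti : ∀ c c' : ℕ, 1 ≤ c → c ≤ c' → μ c' ≤ μ c)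
    (y : ℕ) (hy : 1 ≤ y) :
    (κ y = κ (y + 1) → η y = η (y + 1) ∧ κ y - η y = κ (y + 1) - η (y + 1)) ∧
    (η y = η (y + 1) → 0 < η y → κ (μ (η y) + y) = κ (μ (η y) + y + 1)) := by
  constructor
  · intro hκ
    have h1 := hηanti y (y+1) hy (by omega)
    have h2 := hlamanti y (y+1) hy (by omega)
    have h3 := hsub y hy
    have h4 := hsub (y+1) (by omega)
    omega
  · intro heq hc
    set c := η y with hcdef
    set m := μ c with hmdef
    have hm : m = Set.ncard {z : ℕ | 1 ≤ z ∧ η z < c ∧ c ≤ κ z} := hμ c hc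
    have hle : κ (m+y+1) ≤ κ (m+y) := hκanti (m+y) (m+y+1) (by omega) (by omega)
    by_contra hne
    have hlt : κ (m+y+1) < κ (m+y) := lt_of_le_of_ne hle (fun h => hne h.symm)
    by_cases hB : c ≤ κ (m+y+1)
    · set d := κ (m+y) with hddef
      have hdc : c < d := lt_of_le_of_lt hB hlt
      have hsubset : Set.Icc y (m+y) ⊆ {z : ℕ | 1 ≤ z ∧ η z < d ∧ d ≤ κ z} := by
        intro z hz
        simp only [Set.mem_Icc] at hz
        refine ⟨by omega, ?_, ?_⟩
        · exact lt_of_le_of_lt (hηanti y z hy hz.1) hdc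
        · exact hκanti z (m+y) (by omega) hz.2
      have hfinS : {z : ℕ | 1 ≤ z ∧ η z < d ∧ d ≤ κ z}.Finite := by
        apply Set.Finite.subset (Set.finite_Icc 1 (m+y))
        intro z hz
        simp only [Set.mem_setOf_eq] at hz
        simp only [Set.mem_Icc]
        refine ⟨hz.1, ?_⟩
        by_contra h
        have := hκanti (m+y+1) z (by omega) (by omega)
        omega
      have hcard : (Set.Icc y (m+y)).ncard ≤ {z : ℕ | 1 ≤ z ∧ η z < d ∧ d ≤ κ z}.ncard :=
        Set.ncard_le_ncard hsubset hfinS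
      have hicc : (Set.Icc y (m+y)).ncard = m + 1 := by
        rw [← Finset.coe_Icc, Set.ncard_coe_finset, Nat.card_Icc]; omega
      have hmd := hμ d (by omega)
      have := hμanti c d (by omega) (by omega)
      omega
    · push_neg at hB
      rcases Nat.eq_zero_or_pos m with hm0 | hm1
      · have := hsub (y+1) (by omega)
        rw [hm0] at hB
        simp only [Nat.zero_add] at hB
        omega
      · have hsubset : {z : ℕ | 1 ≤ z ∧ η z < c ∧ c ≤ κ z} ⊆ Set.Icc (y+2) (m+y) := by
          intro z hz
          simp only [Set.mem_setOf_eq] at hz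
          simp only [Set.mem_Icc]
          constructor
          · by_contra h
            have := hηanti z (y+1) hz.1 (by omega)
            omega
          · by_contra h
            have := hκanti (m+y+1) z (by omega) (by omega)
            omega
        have hle2 := Set.ncard_le_ncard hsubset (Set.finite_Icc _ _)
        rw [← Finset.coe_Icc, Set.ncard_coe_finset, Nat.card_Icc] at hle2
        omega
end
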